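/- arXiv:math/0605416 — 11 statements merged into one kernel-verified Lean document; each statement's English description precedes it below -/
import Mathlib

section
/- Let X be a metric space, n ≥ 0, and let D⁽ⁿ⁺¹⁾ : (0,∞) → (0,∞) be an n-dimensional control function of X (in the sense of r-disjoint families). Define a sequence of functions D⁽ⁱ⁾ for i ≥ n+1 inductively by D⁽ⁱ⁺¹⁾(r) = D⁽ⁱ⁾(3r) + 2r. Then for every k ≥ n+1 the function D⁽ᵏ⁾ is an (n,k)-dimensional control function of X. -/
/-!
Induction on `k`. Given `k` families that are `3r`-disjoint and `D(3r)`-bounded, replace every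
member by its open `r`-thickening: the families become `r`-disjoint and `(D(3r) + 2r)`-bounded,
and every point keeps its old coverings. A point that lies in the `r`-thickening of some family
without lying in that family thereby gains one more covering. The remaining "deep" points are
covered by one new family: the deep points grouped by the set of members containing them. Two deep
points at distance `< r` lie in the same members (the `r`-disjointness of each family leaves no
other member within reach), so these classes are `r`-disjoint; and, as `k > n` puts every point
into some family, each class sits inside a single member, hence is `D(3r)`-bounded.
-/

open Metric Set

/-- A family `U` of subsets of a metric space is `r`-disjoint: any two points belonging to
different members of the family are at distance at least `r`. -/
def RDisjoint {X : Type*} [MetricSpace X] (r : ℝ) (U : Set (Set X)) : Prop :=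
  ∀ A ∈ U, ∀ B ∈ U, A ≠ B → ∀ a ∈ A, ∀ b ∈ B, r ≤ dist a b

/-- Every member of the family `U` has diameter at most `R`. -/
def FamBounded {X : Type*} [MetricSpace X] (R : ℝ) (U : Set (Set X)) : Prop :=
  ∀ A ∈ U, ∀ a ∈ A, ∀ b ∈ A, dist a b ≤ R

/-- `D` is an `(n,k)`-dimensional control function for `X`: for every `r > 0` there are
families `U 1, …, U k` of subsets of `X`, each `r`-disjoint and `D r`-bounded, such that
every point of `X` belongs to the union of at least `k - n` of the families.
An `n`-dimensional control function is the case `k = n + 1`. -/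
def IsNKControl (X : Type*) [MetricSpace X] (n k : ℕ) (D : ℝ → ℝ) : Prop :=
  ∀ r > 0, ∃ U : Fin k → Set (Set X),
    (∀ i, RDisjoint r (U i)) ∧ (∀ i, FamBounded (D r) (U i)) ∧
    ∀ x : X, k - n ≤ {i : Fin k | x ∈ ⋃₀ U i}.ncard

section ControlFunctions

variable {X : Type*} [MetricSpace X]

theorem RDisjoint.mono {r s : ℝ} {U : Set (Set X)} (h : RDisjoint s U) (hrs : r ≤ s) :
    RDisjoint r U :=
  fun A hA B hB hAB a ha b hb => hrs.trans (h A hA B hB hAB a ha b hb)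

theorem FamBounded.mono {R S : ℝ} {U : Set (Set X)} (h : FamBounded R U) (hRS : R ≤ S) :
    FamBounded S U :=
  fun A hA a ha b hb => (h A hA a ha b hb).trans hRS

theorem RDisjoint.image_thickening {r s : ℝ} {U : Set (Set X)} (h : RDisjoint (r + 2 * s) U) :
    RDisjoint r (thickening s '' U) := by
  rintro _ ⟨A, hA, rfl⟩ _ ⟨B, hB, rfl⟩ hAB a ha b hb
  obtain ⟨a₀, ha₀, haa₀⟩ := mem_thickening_iff.1 ha
  obtain ⟨b₀, hb₀, hbb₀⟩ := mem_thickening_iff.1 hb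
  have := h A hA B hB (by rintro rfl; exact hAB rfl) a₀ ha₀ b₀ hb₀
  linarith [dist_triangle4 a₀ a b b₀, dist_comm a₀ a]

theorem FamBounded.image_thickening {R s : ℝ} {U : Set (Set X)} (h : FamBounded R U) :
    FamBounded (R + 2 * s) (thickening s '' U) := by
  rintro _ ⟨A, hA, rfl⟩ a ha b hb
  obtain ⟨a₀, ha₀, haa₀⟩ := mem_thickening_iff.1 ha
  obtain ⟨b₀, hb₀, hbb₀⟩ := mem_thickening_iff.1 hb
  linarith [h A hA a₀ ha₀ b₀ hb₀, dist_triangle4 a a₀ b₀ b, dist_comm b₀ b]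

section Refinement

variable {k : ℕ} (U : Fin k → Set (Set X))

def memberTrace (x : X) : Set (Fin k × Set X) :=
  {p | p.2 ∈ U p.1 ∧ x ∈ p.2}

def deepPoints (r : ℝ) : Set X :=
  {x | ∀ i, x ∈ ⋃₀ (thickening r '' U i) → x ∈ ⋃₀ U i}

def traceClasses (r : ℝ) : Set (Set X) :=
  (fun x => {y ∈ deepPoints U r | memberTrace U y = memberTrace U x}) '' deepPoints U r

def refinedFamilies (r : ℝ) : Fin (k + 1) → Set (Set X) :=
  Fin.snoc (α := fun _ => Set (Set X)) (fun i => thickening r '' U i) (traceClasses U r)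

variable {U} {r : ℝ}

theorem memberTrace_subset_of_dist_lt (hU : ∀ i, RDisjoint r (U i)) {a b : X}
    (hb : b ∈ deepPoints U r) (hab : dist a b < r) : memberTrace U a ⊆ memberTrace U b := by
  rintro ⟨i, A⟩ ⟨hA, haA⟩
  obtain ⟨A', hA', hbA'⟩ := hb i ⟨_, mem_image_of_mem _ hA, mem_thickening_iff.2 ⟨a, haA, by
    rwa [dist_comm]⟩⟩
  obtain rfl : A = A' := by
    by_contra hne
    exact (hU i A hA A' hA' hne a haA b hbA').not_gt hab
  exact ⟨hA, hbA'⟩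

theorem memberTrace_eq_of_dist_lt (hU : ∀ i, RDisjoint r (U i)) {a b : X}
    (ha : a ∈ deepPoints U r) (hb : b ∈ deepPoints U r) (hab : dist a b < r) :
    memberTrace U a = memberTrace U b :=
  (memberTrace_subset_of_dist_lt hU hb hab).antisymm
    (memberTrace_subset_of_dist_lt hU ha (by rwa [dist_comm]))

theorem rDisjoint_traceClasses (hU : ∀ i, RDisjoint r (U i)) :
    RDisjoint r (traceClasses U r) := by
  rintro _ ⟨x, -, rfl⟩ _ ⟨y, -, rfl⟩ hne a ⟨ha, hax⟩ b ⟨hb, hby⟩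
  by_contra! hab
  apply hne
  dsimp only
  rw [← hax, ← hby, memberTrace_eq_of_dist_lt hU ha hb hab]

theorem famBounded_traceClasses {R : ℝ} (hU : ∀ i, FamBounded R (U i))
    (hcov : ∀ x, ∃ i, x ∈ ⋃₀ U i) : FamBounded R (traceClasses U r) := by
  rintro _ ⟨x, -, rfl⟩ a ⟨-, hax⟩ b ⟨-, hbx⟩
  obtain ⟨i, A, hA, hxA⟩ := hcov x
  have hx : (i, A) ∈ memberTrace U x := ⟨hA, hxA⟩
  exact hU i A hA a (hax ▸ hx).2 b (hbx ▸ hx).2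

theorem ncard_covering_lt_refinedFamilies (hr : 0 < r) (x : X) :
    {i | x ∈ ⋃₀ U i}.ncard < {j | x ∈ ⋃₀ refinedFamilies U r j}.ncard := by
  have hsub :
      Fin.castSucc '' {i | x ∈ ⋃₀ U i} ⊆ {j | x ∈ ⋃₀ refinedFamilies U r j} := by
    rintro _ ⟨i, ⟨A, hA, hxA⟩, rfl⟩
    simp only [refinedFamilies, mem_ofPred_eq, Fin.snoc_castSucc]
    exact ⟨_, mem_image_of_mem _ hA, self_subset_thickening hr A hxA⟩
  rw [← ncard_image_of_injective _ (Fin.castSucc_injective k)]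
  refine ncard_lt_ncard ((ssubset_iff_of_subset hsub).2 ?_)
  by_cases hx : x ∈ deepPoints U r
  · refine ⟨Fin.last k, ?_, fun ⟨i, _, hi⟩ => Fin.castSucc_ne_last i hi⟩
    simp only [refinedFamilies, mem_ofPred_eq, Fin.snoc_last]
    exact ⟨_, mem_image_of_mem _ hx, hx, rfl⟩
  · simp only [deepPoints, mem_ofPred_eq, not_forall] at hx
    obtain ⟨i, hi, hiU⟩ := hx
    refine ⟨i.castSucc, ?_, ?_⟩
    · simpa only [refinedFamilies, mem_ofPred_eq, Fin.snoc_castSucc] using hi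
    · rintro ⟨j, hj, hji⟩
      exact hiU (Fin.castSucc_injective k hji ▸ hj)

end Refinement

theorem IsNKControl.succ {n k : ℕ} {D : ℝ → ℝ} (hnk : n < k) (h : IsNKControl X n k D) :
    IsNKControl X n (k + 1) (fun r => D (3 * r) + 2 * r) := by
  intro r hr
  obtain ⟨U, hdisj, hbd, hcov⟩ := h (3 * r) (by positivity)
  have hcov' (x : X) : ∃ i, x ∈ ⋃₀ U i := by
    have := hcov x
    exact nonempty_of_ncard_ne_zero (s := {i | x ∈ ⋃₀ U i}) (by omega)
  refine ⟨refinedFamilies U r, fun j => ?_, fun j => ?_, fun x => ?_⟩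
  · induction j using Fin.lastCases with
    | last =>
      rw [refinedFamilies, Fin.snoc_last]
      exact rDisjoint_traceClasses fun i => (hdisj i).mono (by linarith)
    | cast i =>
      rw [refinedFamilies, Fin.snoc_castSucc]
      exact RDisjoint.image_thickening (by convert hdisj i using 1; ring)
  · induction j using Fin.lastCases with
    | last =>
      rw [refinedFamilies, Fin.snoc_last]
      exact (famBounded_traceClasses hbd hcov').mono (by linarith)
    | cast i =>
      rw [refinedFamilies, Fin.snoc_castSucc]
      exact (hbd i).image_thickening
  · have := ncard_covering_lt_refinedFamilies (U := U) hr x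
    have := hcov x
    omega

end ControlFunctions

theorem stmt0_general {X : Type*} [MetricSpace X] (n : ℕ) (D : ℕ → ℝ → ℝ)
    (hbase : IsNKControl X n (n + 1) (D (n + 1)))
    (hind : ∀ i ≥ n + 1, ∀ r : ℝ, D (i + 1) r = D i (3 * r) + 2 * r) :
    ∀ k ≥ n + 1, IsNKControl X n k (D k) := by
  intro k hk
  induction k, hk using Nat.le_induction with
  | base => exact hbase
  | succ k hk ih =>
    rw [show D (k + 1) = fun r => D k (3 * r) + 2 * r from funext (hind k hk)]
    exact ih.succ hk

/-- Ostrand-type theorem: if `D (n+1)` is an `n`-dimensional control function of `X`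
and `D (i+1) r = D i (3 r) + 2 r` for all `i ≥ n + 1`, then `D k` is an
`(n,k)`-dimensional control function of `X` for every `k ≥ n + 1`. -/
theorem stmt0 {X : Type*} [MetricSpace X] (n : ℕ) (D : ℕ → ℝ → ℝ)
    (hpos : ∀ r > 0, 0 < D (n + 1) r)
    (hbase : IsNKControl X n (n + 1) (D (n + 1)))
    (hind : ∀ i ≥ n + 1, ∀ r : ℝ, D (i + 1) r = D i (3 * r) + 2 * r) :
    ∀ k ≥ n + 1, IsNKControl X n k (D k) :=
  stmt0_general n D hbase hind
end

section
/- Let X and Y be metric spaces with asdim(X) ≤ m and asdim(Y) ≤ n, and equip X × Y with the sum metric d((x,y),(x',y')) = d_X(x,x') + d_Y(y,y'). Then asdim(X × Y) ≤ m + n. -/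
open Metric Set

/-- `D` is an `n`-dimensional control function for `X` (in the sense of `r`-disjoint
families): for every `r > 0` there is a cover of `X` by `n + 1` families of subsets,
each family `r`-disjoint and with members of diameter at most `D r`. -/
def IsDimControl (X : Type*) [MetricSpace X] (n : ℕ) (D : ℝ → ℝ) : Prop :=
  ∀ r > 0, ∃ U : Fin (n + 1) → Set (Set X),
    (∀ i, RDisjoint r (U i)) ∧ (∀ i, FamBounded (D r) (U i)) ∧
    ∀ x : X, ∃ i, x ∈ ⋃₀ U i

/-- `asdim X ≤ n`: `X` admits an `n`-dimensional control function. -/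
def AsdimSpaceLE (X : Type*) [MetricSpace X] (n : ℕ) : Prop :=
  ∃ D : ℝ → ℝ, (∀ r > 0, 0 < D r) ∧ IsDimControl X n D

/-- The sum metric on the product of two metric spaces. -/
noncomputable def sumMetric (X Y : Type*) [MetricSpace X] [MetricSpace Y] :
    MetricSpace (X × Y) where
  dist p q := dist p.1 q.1 + dist p.2 q.2
  dist_self p := by simp
  dist_comm p q := by simp [dist_comm]
  dist_triangle p q s := by
    have h1 := dist_triangle p.1 q.1 s.1
    have h2 := dist_triangle p.2 q.2 s.2
    try dsimp only
    linarith
  eq_of_dist_eq_zero := by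
    intro p q h
    try dsimp only at h
    have h1 : dist p.1 q.1 = 0 :=
      le_antisymm (by linarith [dist_nonneg (x := p.2) (y := q.2)]) dist_nonneg
    have h2 : dist p.2 q.2 = 0 := by linarith
    exact Prod.ext (dist_eq_zero.1 h1) (dist_eq_zero.1 h2)

/-!
Given covers of `X` and `Y` at a large scale, turn each into a Lipschitz chain
`0 = F 0 ≤ … ≤ F (m + 1) = 1` whose `i`-th step is nonzero only near the `i`-th family. A point
`z = (x, y)` then carries the `m + n + 4` values of both chains. By pigeonhole some scale
`3⁻¹ ^ p`, among boundedly many, has no difference of two values in `(3⁻¹ ^ (p + 1), 3⁻¹ ^ p]`;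
at that scale, being `3⁻¹ ^ (p + 1)`-close is an equivalence relation on the labels with between
`2` and `m + n + 2` classes (both chains start at `0` and end at `1`), and `z` gets the colour
`#classes - 2`. Each chain must break between `0` and `1`; the first break tags `z` with a member
of a family of `X` and of `Y` near which it lies. The pieces of one colour are indexed by the
relation and the two tags. For nearby points the values are close, so one relation refines the
other; equal class counts force them to coincide, and then distinct tags are far apart.
-/

open scoped NNReal

lemma RDisjoint.lt_dist_of_mem_thickening {X : Type*} [MetricSpace X] {L ρ : ℝ}
    {U : Set (Set X)} (h : RDisjoint L U) {A B : Set X} (hA : A ∈ U) (hB : B ∈ U) (hAB : A ≠ B)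
    {x y : X} (hx : x ∈ thickening ρ A) (hy : y ∈ thickening ρ B) : L - 2 * ρ < dist x y := by
  obtain ⟨a, ha, hxa⟩ := mem_thickening_iff.mp hx
  obtain ⟨b, hb, hyb⟩ := mem_thickening_iff.mp hy
  have := h A hA B hB hAB a ha b hb
  have := dist_triangle4 a x y b
  linarith [dist_comm a x]

lemma FamBounded.dist_lt_of_mem_thickening {X : Type*} [MetricSpace X] {D ρ : ℝ}
    {U : Set (Set X)} (h : FamBounded D U) {A : Set X} (hA : A ∈ U) {x y : X}
    (hx : x ∈ thickening ρ A) (hy : y ∈ thickening ρ A) : dist x y < D + 2 * ρ := by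
  obtain ⟨a, ha, hxa⟩ := mem_thickening_iff.mp hx
  obtain ⟨b, hb, hyb⟩ := mem_thickening_iff.mp hy
  have := h A hA a ha b hb
  have := dist_triangle4 x a b y
  linarith [dist_comm b y]

lemma Fin.partialSum_last {M : Type*} [AddCommMonoid M] {k : ℕ} (f : Fin k → M) :
    Fin.partialSum f (Fin.last k) = ∑ i, f i := by
  rw [Fin.partialSum, Fin.val_last, List.take_of_length_le (List.length_ofFn).le, List.sum_ofFn]

namespace AsdimProd

noncomputable def scale (p : ℕ) : ℝ := 3⁻¹ ^ p

lemma scale_pos (p : ℕ) : 0 < scale p := by unfold scale; positivity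

lemma scale_succ (p : ℕ) : scale (p + 1) = scale p / 3 := by
  simp [scale, pow_succ, div_eq_mul_inv]

lemma scale_anti {p q : ℕ} (h : p ≤ q) : scale q ≤ scale p :=
  pow_le_pow_of_le_one (by norm_num) (by norm_num) h

lemma scale_succ_lt_one (p : ℕ) : scale (p + 1) < 1 :=
  pow_lt_one₀ (by norm_num) (by norm_num) p.succ_ne_zero

section Levels

variable {ι : Type*}

def Near (p : ℕ) (u : ι → ℝ) (s t : ι) : Prop := |u s - u t| ≤ scale (p + 1)

def GapFree (p : ℕ) (u : ι → ℝ) : Prop := ∀ s t, |u s - u t| ≤ scale p → Near p u s t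

lemma near_of_eq {p : ℕ} {u : ι → ℝ} {s t : ι} (h : u s = u t) : Near p u s t := by
  simp [Near, h, (scale_pos _).le]

lemma not_near_of_eq_zero_of_eq_one {p : ℕ} {u : ι → ℝ} {s t : ι} (hs : u s = 0)
    (ht : u t = 1) : ¬ Near p u s t := by
  simpa [Near, hs, ht] using scale_succ_lt_one p

lemma GapFree.equivalence {p : ℕ} {u : ι → ℝ} (h : GapFree p u) : Equivalence (Near p u) where
  refl _ := near_of_eq rfl
  symm := by intro s t hst; rwa [Near, abs_sub_comm]
  trans := by
    intro s t w hst htw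
    refine h s w ?_
    calc |u s - u w| ≤ |u s - u t| + |u t - u w| := abs_sub_le _ _ _
      _ ≤ scale p := by unfold Near at hst htw; linarith [scale_succ p, scale_pos p]

theorem exists_gapFree_le [Fintype ι] (u : ι → ℝ) :
    ∃ p ≤ Fintype.card ι ^ 2, GapFree p u := by
  by_contra! hbad
  have hpair : ∀ p : Fin (Fintype.card ι ^ 2 + 1), ∃ st : ι × ι,
      scale (p + 1) < |u st.1 - u st.2| ∧ |u st.1 - u st.2| ≤ scale p := by
    intro p
    obtain ⟨s, t, hle, hlt⟩ : ∃ s t, |u s - u t| ≤ scale p ∧ ¬ Near p u s t := by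
      simpa [GapFree] using hbad p (Nat.lt_succ_iff.mp p.isLt)
    exact ⟨(s, t), not_le.mp hlt, hle⟩
  choose f hlow hup using hpair
  obtain ⟨p, q, hpq, hf⟩ := Fintype.exists_ne_map_eq_of_card_lt f (by simp [sq])
  have hband : ∀ {p q : Fin _}, p < q → f p = f q → False := fun {p q} hlt heq =>
    (hlow p).not_ge (heq ▸ (hup q).trans (scale_anti (Fin.lt_def.mp hlt)))
  rcases hpq.lt_or_gt with h | h
  exacts [hband h hf, hband h hf.symm]

lemma GapFree.near_of_near_of_close {p p' : ℕ} {u u' : ι → ℝ} (hu : GapFree p u) (hp : p ≤ p')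
    (hclose : ∀ s, |u s - u' s| ≤ scale (p + 1)) {s t : ι} (h : Near p' u' s t) :
    Near p u s t := by
  refine hu s t ?_
  have h' : |u' s - u' t| ≤ scale (p + 1) := h.trans (scale_anti (by omega))
  calc |u s - u t| = |(u s - u' s) + (u' s - u' t) - (u t - u' t)| := by ring_nf
    _ ≤ |u s - u' s| + |u' s - u' t| + |u t - u' t| :=
        (abs_sub _ _).trans (add_le_add_left (abs_add_le _ _) _)
    _ ≤ scale p := by linarith [hclose s, hclose t, scale_succ p]

lemma eq_of_le_of_card_quot_eq [Finite ι] {E E' : ι → ι → Prop} (hE' : Equivalence E')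
    (hle : ∀ s t, E' s t → E s t) (hcard : Nat.card (Quot E) = Nat.card (Quot E')) :
    E = E' := by
  have hbij : Function.Bijective (Quot.map id hle) :=
    (Nat.bijective_iff_surjective_and_card _).mpr
      ⟨Quot.ind fun s => ⟨Quot.mk _ s, rfl⟩, hcard.symm⟩
  ext s t
  refine ⟨fun h => ?_, hle s t⟩
  exact hE'.eqvGen_iff.mp (Quot.eq.mp (hbij.1 (Quot.sound h : Quot.mk E s = Quot.mk E t)))

theorem near_eq_of_close [Finite ι] {P p p' : ℕ} {u u' : ι → ℝ} (hp : p ≤ P) (hp' : p' ≤ P)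
    (hu : GapFree p u) (hu' : GapFree p' u') (hclose : ∀ s, |u s - u' s| ≤ scale (P + 1))
    (hcard : Nat.card (Quot (Near p u)) = Nat.card (Quot (Near p' u'))) :
    Near p u = Near p' u' := by
  wlog hpp : p ≤ p' generalizing p p' u u'
  · exact (this hp' hp hu' hu (fun s => abs_sub_comm (u s) (u' s) ▸ hclose s) hcard.symm
      (by omega)).symm
  exact eq_of_le_of_card_quot_eq hu'.equivalence
    (fun s t => hu.near_of_near_of_close hpp fun w => (hclose w).trans (scale_anti (by omega)))
    hcard

lemma two_le_card_quot_of_not_rel [Finite ι] {E : ι → ι → Prop} (hE : Equivalence E) {s t : ι}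
    (h : ¬ E s t) : 2 ≤ Nat.card (Quot E) := by
  have : Nontrivial (Quot E) :=
    nontrivial_of_ne (Quot.mk E s) (Quot.mk E t) fun hq => h (hE.eqvGen_iff.mp (Quot.eq.mp hq))
  exact Finite.one_lt_card_iff_nontrivial.mpr this

end Levels

open Classical in
noncomputable def breakIndex {k : ℕ} (E : Fin (k + 2) → Fin (k + 2) → Prop) : Fin (k + 1) :=
  if h : ∃ i : Fin (k + 1), ¬ E i.castSucc i.succ then h.choose else 0

lemma not_rel_breakIndex {k : ℕ} {E : Fin (k + 2) → Fin (k + 2) → Prop} (hE : Equivalence E)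
    (h : ¬ E 0 (Fin.last _)) : ¬ E (breakIndex E).castSucc (breakIndex E).succ := by
  have hex : ∃ i : Fin (k + 1), ¬ E i.castSucc i.succ := by
    by_contra! hchain
    exact h (Fin.induction (hE.refl 0) (fun i hi => hE.trans hi (hchain i)) (Fin.last _))
  rw [breakIndex, dif_pos hex]
  exact hex.choose_spec

abbrev Label (m n : ℕ) : Type := Fin (m + 2) ⊕ Fin (n + 2)

lemma card_quot_le {m n : ℕ} {E : Label m n → Label m n → Prop} (h0 : E (.inl 0) (.inr 0))
    (h1 : E (.inl (Fin.last _)) (.inr (Fin.last _))) : Nat.card (Quot E) ≤ m + n + 2 := by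
  let f : Fin (m + 2) ⊕ Fin n → Quot E :=
    Sum.elim (fun s => Quot.mk E (.inl s)) (fun j => Quot.mk E (.inr j.castSucc.succ))
  have hf : Function.Surjective f := by
    refine Quot.ind ?_
    rintro (s | t)
    · exact ⟨.inl s, rfl⟩
    · cases t using Fin.cases with
      | zero => exact ⟨.inl 0, Quot.sound h0⟩
      | succ j =>
        cases j using Fin.lastCases with
        | last => exact ⟨.inl (Fin.last _), by simpa [f] using Quot.sound h1⟩
        | cast j => exact ⟨.inr j, rfl⟩
  simpa [Nat.card_sum, add_right_comm] using Nat.card_le_card_of_surjective f hf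

structure CoverChain {X : Type*} [PseudoMetricSpace X] {m : ℕ} (U : Fin (m + 1) → Set (Set X))
    (ρ : ℝ) (K : ℝ≥0) where
  F : Fin (m + 2) → X → ℝ
  F_zero : ∀ x, F 0 x = 0
  F_last : ∀ x, F (Fin.last _) x = 1
  lipschitz : ∀ t, LipschitzWith K (F t)
  exists_mem_thickening : ∀ i x, F i.castSucc x ≠ F i.succ x → ∃ A ∈ U i, x ∈ thickening ρ A

namespace CoverChain

variable {X : Type*} [PseudoMetricSpace X] {m : ℕ} {U : Fin (m + 1) → Set (Set X)} {ρ : ℝ}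
  {K : ℝ≥0}

def mono (c : CoverChain U ρ K) {K' : ℝ≥0} (hK : K ≤ K') : CoverChain U ρ K' :=
  { c with lipschitz := fun t => (c.lipschitz t).weaken hK }

theorem nonempty (hρ : 0 < ρ) (hU : ∀ x, ∃ i, x ∈ ⋃₀ U i) :
    Nonempty (CoverChain U ρ ((m + 1) * ρ.toNNReal⁻¹)) := by
  let g : Fin (m + 1) → X → ℝ := fun i x => thickenedIndicator hρ (⋃₀ U i) x
  have hg : ∀ i, LipschitzWith ρ.toNNReal⁻¹ (g i) := fun i =>
    (NNReal.isometry_coe.lipschitzWith_iff _).mpr (lipschitzWith_thickenedIndicator hρ _)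
  let S : Fin (m + 2) → X → ℝ := fun t x => Fin.partialSum (g · x) t
  have hS : ∀ t : Fin (m + 2), LipschitzWith ((t : ℕ) * ρ.toNNReal⁻¹) (S t) := by
    refine Fin.induction ?_ fun i hi => ?_
    · simp [S]
    · simpa [S, Fin.partialSum_succ, add_mul] using hi.add (hg i)
  refine ⟨⟨fun t x => min 1 (S t x), fun x => by simp [S], fun x => ?_, fun t => ?_,
    fun i x hx => ?_⟩⟩
  · obtain ⟨i, hi⟩ := hU x
    refine min_eq_left ?_
    calc (1 : ℝ) = g i x := by simp only [g, thickenedIndicator_one hρ _ hi, NNReal.coe_one]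
      _ ≤ ∑ j, g j x :=
          Finset.single_le_sum (f := (g · x)) (fun j _ => NNReal.coe_nonneg _) (Finset.mem_univ i)
      _ = S (Fin.last _) x := (Fin.partialSum_last _).symm
  · have ht : (t : ℝ≥0) * ρ.toNNReal⁻¹ ≤ (m + 1 : ℝ≥0) * ρ.toNNReal⁻¹ := by
      gcongr
      exact_mod_cast Nat.lt_succ_iff.mp t.isLt
    exact ((hS t).const_min 1).weaken ht
  · have hgi : g i x ≠ 0 := fun h0 => hx (by simp [S, Fin.partialSum_succ, h0])
    have hxU : x ∈ thickening ρ (⋃₀ U i) := by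
      by_contra h
      exact hgi (by simp only [g, thickenedIndicator_zero hρ _ h, NNReal.coe_zero])
    obtain ⟨a, ⟨A, hA, haA⟩, hd⟩ := mem_thickening_iff.mp hxU
    exact ⟨A, hA, mem_thickening_iff.mpr ⟨a, haA, hd⟩⟩

end CoverChain

section Product

open Function

variable {X Y : Type*} [MetricSpace X] [MetricSpace Y] {m n : ℕ} {UX : Fin (m + 1) → Set (Set X)}
  {UY : Fin (n + 1) → Set (Set Y)} {ρ : ℝ} {K : ℝ≥0}
  (cX : CoverChain UX ρ K) (cY : CoverChain UY ρ K)

def levelBound (m n : ℕ) : ℕ := Fintype.card (Label m n) ^ 2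

def chainValues (z : X × Y) : Label m n → ℝ := Sum.elim (cX.F · z.1) (cY.F · z.2)

def piece (E : Label m n → Label m n → Prop) (A : Set X) (B : Set Y) : Set (X × Y) :=
  {z | (∃ p ≤ levelBound m n, GapFree p (chainValues cX cY z) ∧ Near p (chainValues cX cY z) = E) ∧
    z.1 ∈ thickening ρ A ∧ z.2 ∈ thickening ρ B}

def prodFamily (k : ℕ) : Set (Set (X × Y)) :=
  {S | ∃ E A B, Nat.card (Quot E) = k + 2 ∧ A ∈ UX (breakIndex (E on Sum.inl)) ∧
    B ∈ UY (breakIndex (E on Sum.inr)) ∧ S = piece cX cY E A B}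

theorem exists_mem_prodFamily (z : X × Y) :
    ∃ k : Fin (m + n + 1), ∃ S ∈ prodFamily cX cY k, z ∈ S := by
  obtain ⟨p, hp, hu⟩ := exists_gapFree_le (chainValues cX cY z)
  have hE := hu.equivalence
  have hX : ¬ Near p (chainValues cX cY z) (.inl 0) (.inl (Fin.last _)) :=
    not_near_of_eq_zero_of_eq_one (cX.F_zero z.1) (cX.F_last z.1)
  have hY : ¬ Near p (chainValues cX cY z) (.inr 0) (.inr (Fin.last _)) :=
    not_near_of_eq_zero_of_eq_one (cY.F_zero z.2) (cY.F_last z.2)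
  have hlow := two_le_card_quot_of_not_rel hE hX
  have hup := card_quot_le (E := Near p (chainValues cX cY z))
    (near_of_eq ((cX.F_zero z.1).trans (cY.F_zero z.2).symm))
    (near_of_eq ((cX.F_last z.1).trans (cY.F_last z.2).symm))
  obtain ⟨A, hA, hzA⟩ := cX.exists_mem_thickening _ z.1 fun h =>
    not_rel_breakIndex (hE.comap Sum.inl) hX (near_of_eq h)
  obtain ⟨B, hB, hzB⟩ := cY.exists_mem_thickening _ z.2 fun h =>
    not_rel_breakIndex (hE.comap Sum.inr) hY (near_of_eq h)
  exact ⟨⟨Nat.card (Quot (Near p (chainValues cX cY z))) - 2, by omega⟩, _,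
    ⟨_, A, B, by simp only; omega, hA, hB, rfl⟩, ⟨p, hp, hu, rfl⟩, hzA, hzB⟩

lemma abs_chainValues_sub_le (z z' : X × Y) (s : Label m n) :
    |chainValues cX cY z s - chainValues cX cY z' s| ≤ K * (dist z.1 z'.1 + dist z.2 z'.2) := by
  rcases s with t | t
  · calc _ ≤ K * dist z.1 z'.1 := (cX.lipschitz t).dist_le_mul z.1 z'.1
      _ ≤ _ := by gcongr; exact le_add_of_nonneg_right dist_nonneg
  · calc _ ≤ K * dist z.2 z'.2 := (cY.lipschitz t).dist_le_mul z.2 z'.2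
      _ ≤ _ := by gcongr; exact le_add_of_nonneg_left dist_nonneg

theorem dist_le_of_mem_prodFamily {DX DY : ℝ} (hUX : ∀ i, FamBounded DX (UX i))
    (hUY : ∀ j, FamBounded DY (UY j)) {k : ℕ} {S : Set (X × Y)} (hS : S ∈ prodFamily cX cY k)
    {z z' : X × Y} (hz : z ∈ S) (hz' : z' ∈ S) :
    dist z.1 z'.1 + dist z.2 z'.2 ≤ DX + DY + 4 * ρ := by
  obtain ⟨E, A, B, -, hA, hB, rfl⟩ := hS
  have hX := (hUX _).dist_lt_of_mem_thickening hA hz.2.1 hz'.2.1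
  have hY := (hUY _).dist_lt_of_mem_thickening hB hz.2.2 hz'.2.2
  linarith

theorem le_dist_of_mem_prodFamily {L r : ℝ} (hUX : ∀ i, RDisjoint L (UX i))
    (hUY : ∀ j, RDisjoint L (UY j)) (hL : r + 2 * ρ ≤ L) (hK : K * r ≤ scale (levelBound m n + 1))
    {k : ℕ} {S S' : Set (X × Y)} (hS : S ∈ prodFamily cX cY k) (hS' : S' ∈ prodFamily cX cY k)
    (hne : S ≠ S') {z z' : X × Y} (hz : z ∈ S) (hz' : z' ∈ S') :
    r ≤ dist z.1 z'.1 + dist z.2 z'.2 := by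
  obtain ⟨E, A, B, hk, hA, hB, rfl⟩ := hS
  obtain ⟨E', A', B', hk', hA', hB', rfl⟩ := hS'
  obtain ⟨⟨p, hp, hu, rfl⟩, hzA, hzB⟩ := hz
  obtain ⟨⟨p', hp', hu', rfl⟩, hzA', hzB'⟩ := hz'
  by_contra! hlt
  have hclose : ∀ s, |chainValues cX cY z s - chainValues cX cY z' s| ≤
      scale (levelBound m n + 1) := fun s =>
    (abs_chainValues_sub_le cX cY z z' s).trans ((mul_le_mul_of_nonneg_left hlt.le K.2).trans hK)
  have hE := near_eq_of_close hp hp' hu hu' hclose (hk.trans hk'.symm)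
  rw [← hE] at hA' hB'
  have hAA : A = A' := by
    by_contra h
    have := (hUX _).lt_dist_of_mem_thickening hA hA' h hzA hzA'
    linarith [dist_nonneg (x := z.2) (y := z'.2)]
  have hBB : B = B' := by
    by_contra h
    have := (hUY _).lt_dist_of_mem_thickening hB hB' h hzB hzB'
    linarith [dist_nonneg (x := z.1) (y := z'.1)]
  exact hne (by rw [hE, hAA, hBB])

theorem exists_prod_cover {ρ r DX DY : ℝ} (hρ : 0 < ρ)
    (hr : (m + n + 1) * r ≤ ρ * scale (levelBound m n + 1))
    (hUXd : ∀ i, RDisjoint (r + 2 * ρ) (UX i)) (hUXb : ∀ i, FamBounded DX (UX i))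
    (hUXc : ∀ x, ∃ i, x ∈ ⋃₀ UX i)
    (hUYd : ∀ j, RDisjoint (r + 2 * ρ) (UY j)) (hUYb : ∀ j, FamBounded DY (UY j))
    (hUYc : ∀ y, ∃ j, y ∈ ⋃₀ UY j) :
    ∃ U : Fin (m + n + 1) → Set (Set (X × Y)), (∀ k, @RDisjoint _ (sumMetric X Y) r (U k)) ∧
      (∀ k, @FamBounded _ (sumMetric X Y) (DX + DY + 4 * ρ) (U k)) ∧ ∀ z, ∃ k, z ∈ ⋃₀ U k := by
  obtain ⟨cX⟩ := CoverChain.nonempty hρ hUXc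
  obtain ⟨cY⟩ := CoverChain.nonempty hρ hUYc
  let K : ℝ≥0 := (m + n + 1) * ρ.toNNReal⁻¹
  have hK : K * r ≤ scale (levelBound m n + 1) := by
    simp only [K, NNReal.coe_mul, NNReal.coe_inv, Real.coe_toNNReal _ hρ.le]
    push_cast
    rw [mul_right_comm, ← div_eq_mul_inv, div_le_iff₀' hρ]
    exact hr
  let cX' := cX.mono (K' := K) (mul_le_mul_left (by norm_cast; omega) _)
  let cY' := cY.mono (K' := K) (mul_le_mul_left (by norm_cast; omega) _)
  refine ⟨prodFamily cX' cY' ∘ Fin.val,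
    fun k S hS S' hS' hne z hz z' hz' =>
      le_dist_of_mem_prodFamily cX' cY' hUXd hUYd le_rfl hK hS hS' hne hz hz',
    fun k S hS z hz z' hz' => dist_le_of_mem_prodFamily cX' cY' hUXb hUYb hS hz hz',
    exists_mem_prodFamily cX' cY'⟩

end Product

end AsdimProd

open AsdimProd

/-- If `asdim X ≤ m` and `asdim Y ≤ n`, then the product `X × Y` with the sum metric
satisfies `asdim (X × Y) ≤ m + n`. -/
theorem stmt1 {X Y : Type*} [MetricSpace X] [MetricSpace Y] (m n : ℕ)
    (hX : AsdimSpaceLE X m) (hY : AsdimSpaceLE Y n) :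
    @AsdimSpaceLE (X × Y) (sumMetric X Y) (m + n) := by
  obtain ⟨DX, hDX₀, hDX⟩ := hX
  obtain ⟨DY, hDY₀, hDY⟩ := hY
  have hδ := scale_pos (levelBound m n + 1)
  let ρ : ℝ → ℝ := fun r => (m + n + 1) * r / scale (levelBound m n + 1)
  have hρ : ∀ r > 0, 0 < ρ r := fun r hr => by positivity
  have hL : ∀ r > 0, 0 < r + 2 * ρ r := fun r hr => by linarith [hρ r hr]
  refine ⟨fun r => DX (r + 2 * ρ r) + DY (r + 2 * ρ r) + 4 * ρ r, fun r hr => ?_, fun r hr => ?_⟩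
  · linarith [hDX₀ _ (hL r hr), hDY₀ _ (hL r hr), hρ r hr]
  obtain ⟨UX, hUXd, hUXb, hUXc⟩ := hDX _ (hL r hr)
  obtain ⟨UY, hUYd, hUYb, hUYc⟩ := hDY _ (hL r hr)
  exact exists_prod_cover (hρ r hr) (by rw [div_mul_cancel₀ _ hδ.ne']) hUXd hUXb hUXc hUYd hUYb hUYc
end

section
/- Let X and Y be metric spaces with dim_AN(X) ≤ m and dim_AN(Y) ≤ n, and equip X × Y with the sum metric d((x,y),(x',y')) = d_X(x,x') + d_Y(y,y'). Then dim_AN(X × Y) ≤ m + n. -/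
open Metric Set

/-- `dim_AN X ≤ n`: `X` admits an `n`-dimensional control function which is a dilation,
i.e. of the form `D r = c * r` for some constant `c > 0`. -/
def DimANLE (X : Type*) [MetricSpace X] (n : ℕ) : Prop :=
  ∃ c : ℝ, 0 < c ∧ IsDimControl X n (fun r => c * r)

/-!
Kolmogorov–Ostrand trick: take an `(m + 1)`-coloured cover of `X` at scale `(2k + 1) r` and, for
`x ∈ X`, let `T_j(x)` be the set of members within `j r` of `x`. The sets where
`T_j = T_{j+1}` is constant form an `r`-disjoint family with diameters `O(k r)`, and since
`T_0(x) ⊆ ⋯ ⊆ T_k(x)` grows from one member to at most `m + 1`, every `x` lies in all but at most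
`m` of these `k` families. Doing this for `X` and `Y` with `k = m + n + 1`, some index `j` serves
both coordinates of a given point, and products of members of the `j`-th families form
`m + n + 1` families that witness `dim_AN (X × Y) ≤ m + n` for the sum metric.
-/

theorem FamBounded.mono_s2 {X : Type*} [MetricSpace X] {R R' : ℝ} {U : Set (Set X)}
    (hU : FamBounded R U) (hR : R ≤ R') : FamBounded R' U :=
  fun A hA a ha b hb => (hU A hA a ha b hb).trans hR

section SumMetric

variable {X Y : Type*} [MetricSpace X] [MetricSpace Y]

theorem RDisjoint.image2_prod {r : ℝ} {A : Set (Set X)} {B : Set (Set Y)}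
    (hA : RDisjoint r A) (hB : RDisjoint r B) :
    @RDisjoint (X × Y) (sumMetric X Y) r (image2 (· ×ˢ ·) A B) := by
  rintro _ ⟨A₁, hA₁, B₁, hB₁, rfl⟩ _ ⟨A₂, hA₂, B₂, hB₂, rfl⟩ hne p ⟨hp₁, hp₂⟩ q ⟨hq₁, hq₂⟩
  show r ≤ dist p.1 q.1 + dist p.2 q.2
  by_cases hAA : A₁ = A₂
  · subst hAA
    have hBB : B₁ ≠ B₂ := by rintro rfl; exact hne rfl
    linarith [hB B₁ hB₁ B₂ hB₂ hBB p.2 hp₂ q.2 hq₂, dist_nonneg (x := p.1) (y := q.1)]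
  · linarith [hA A₁ hA₁ A₂ hA₂ hAA p.1 hp₁ q.1 hq₁, dist_nonneg (x := p.2) (y := q.2)]

theorem FamBounded.image2_prod {R R' : ℝ} {A : Set (Set X)} {B : Set (Set Y)}
    (hA : FamBounded R A) (hB : FamBounded R' B) :
    @FamBounded (X × Y) (sumMetric X Y) (R + R') (image2 (· ×ˢ ·) A B) := by
  rintro _ ⟨A₁, hA₁, B₁, hB₁, rfl⟩ p ⟨hp₁, hp₂⟩ q ⟨hq₁, hq₂⟩
  exact add_le_add (hA A₁ hA₁ p.1 hp₁ q.1 hq₁) (hB B₁ hB₁ p.2 hp₂ q.2 hq₂)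

end SumMetric

open Classical in
theorem card_filter_ne_succ_add_ncard_le {α : Type*} {s : ℕ → Set α} (hs : Monotone s) :
    ∀ {k : ℕ}, (s k).Finite →
      ((Finset.range k).filter fun j => s j ≠ s (j + 1)).card + (s 0).ncard ≤ (s k).ncard
  | 0, _ => by simp
  | k + 1, hk => by
    have ih := card_filter_ne_succ_add_ncard_le hs (hk.subset (hs k.le_succ))
    rw [Finset.range_add_one, Finset.filter_insert]
    by_cases h : s k = s (k + 1)
    · simpa [h] using ih
    · have hlt : (s k).ncard < (s (k + 1)).ncard :=
        ncard_lt_ncard (lt_of_le_of_ne (hs k.le_succ) h) hk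
      rw [if_pos h, Finset.card_insert_of_notMem (by simp)]
      omega

namespace AssouadNagata

variable {X ι : Type*} [MetricSpace X]

/-- The members of the coloured cover `U` that come within `t` of `x`, tagged with their colour. -/
def nearMembers (U : ι → Set (Set X)) (t : ℝ) (x : X) : Set (ι × Set X) :=
  {p | p.2 ∈ U p.1 ∧ p.2.Nonempty ∧ infDist x p.2 ≤ t}

theorem nearMembers_mono (U : ι → Set (Set X)) (x : X) :
    Monotone fun t => nearMembers U t x :=
  fun _ _ h _ hp => ⟨hp.1, hp.2.1, hp.2.2.trans h⟩

theorem mem_nearMembers_of_mem {U : ι → Set (Set X)} {t : ℝ} (ht : 0 ≤ t) {x : X} {i : ι}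
    {A : Set X} (hA : A ∈ U i) (hx : x ∈ A) : (i, A) ∈ nearMembers U t x :=
  ⟨hA, ⟨x, hx⟩, by rwa [infDist_zero_of_mem hx]⟩

theorem le_dist_of_mem_nearMembers_of_notMem {U : ι → Set (Set X)} {t r : ℝ} {a b : X}
    {p : ι × Set X} (ha : p ∈ nearMembers U t a) (hb : p ∉ nearMembers U (t + r) b) :
    r ≤ dist a b := by
  have hlt : t + r < infDist b p.2 := not_le.1 fun h => hb ⟨ha.1, ha.2.1, h⟩
  linarith [ha.2.2, infDist_le_infDist_add_dist (x := b) (y := a) (s := p.2), dist_comm a b]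

/-- Distinct members of one colour are `L`-apart, so a ball of radius `t < L / 2` meets at most
one of them. -/
theorem injOn_fst_nearMembers {U : ι → Set (Set X)} {L t : ℝ} (hU : ∀ i, RDisjoint L (U i))
    (ht : 2 * t < L) (x : X) : InjOn Prod.fst (nearMembers U t x) := by
  rintro ⟨i, A⟩ ⟨hA, hAne, hxA⟩ ⟨i', B⟩ ⟨hB, hBne, hxB⟩ (rfl : i = i')
  by_contra hne
  have hAB : A ≠ B := fun h => hne (h ▸ rfl)
  obtain ⟨a, ha, hxa⟩ := (infDist_lt_iff hAne).1 (show infDist x A < L / 2 by linarith)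
  obtain ⟨b, hb, hxb⟩ := (infDist_lt_iff hBne).1 (show infDist x B < L / 2 by linarith)
  linarith [hU i A hA B hB hAB a ha b hb, dist_triangle_left a b x]

/-- The sets on which the members near a point do not change between the levels `j * r` and
`(j + 1) * r`. -/
def levelFamily (U : ι → Set (Set X)) (r : ℝ) (j : ℕ) : Set (Set X) :=
  range fun F => {y | nearMembers U (j * r) y = F ∧ nearMembers U (j * r + r) y = F}

theorem rDisjoint_levelFamily (U : ι → Set (Set X)) (r : ℝ) (j : ℕ) :
    RDisjoint r (levelFamily U r j) := by
  rintro _ ⟨F, rfl⟩ _ ⟨F', rfl⟩ hne a ⟨haF, haF'⟩ b ⟨hbF, hbF'⟩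
  by_cases hF : F ⊆ F'
  · have hF' : ¬ F' ⊆ F := fun h => hne (by rw [hF.antisymm h])
    obtain ⟨p, hpF', hpF⟩ := not_subset.1 hF'
    rw [dist_comm]
    exact le_dist_of_mem_nearMembers_of_notMem (hbF ▸ hpF') (haF' ▸ hpF)
  · obtain ⟨p, hpF, hpF'⟩ := not_subset.1 hF
    exact le_dist_of_mem_nearMembers_of_notMem (haF ▸ hpF) (hbF' ▸ hpF')

theorem famBounded_levelFamily {U : ι → Set (Set X)} {D r : ℝ} (hr : 0 ≤ r)
    (hU : ∀ i, FamBounded D (U i)) (hcov : ∀ x, ∃ i, x ∈ ⋃₀ U i) (j : ℕ) :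
    FamBounded (D + j * r) (levelFamily U r j) := by
  rintro _ ⟨F, rfl⟩ a ⟨haF, -⟩ b ⟨hbF, -⟩
  obtain ⟨i, A, hA, haA⟩ := hcov a
  have hb : (i, A) ∈ nearMembers U (j * r) b :=
    hbF ▸ haF ▸ mem_nearMembers_of_mem (by positivity) hA haA
  have hbA : dist a b - D ≤ infDist b A := (le_infDist ⟨a, haA⟩).2 fun b' hb' => by
    linarith [hU i A hA a haA b' hb', dist_triangle_right a b b']
  linarith [hb.2.2]

theorem mem_sUnion_levelFamily {U : ι → Set (Set X)} {r : ℝ} {j : ℕ} {x : X}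
    (hx : nearMembers U (j * r) x = nearMembers U (j * r + r) x) :
    x ∈ ⋃₀ levelFamily U r j :=
  ⟨_, ⟨nearMembers U (j * r) x, rfl⟩, rfl, hx.symm⟩

open Classical in
/-- The members near `x` grow from at least one (the member containing `x`) to at most `m + 1`
(one per colour), so they change at most `m` times. -/
theorem card_filter_notMem_sUnion_levelFamily_le {m k : ℕ} {U : Fin (m + 1) → Set (Set X)}
    {L r : ℝ} (hr : 0 ≤ r) (hU : ∀ i, RDisjoint L (U i)) (hL : 2 * (k * r) < L)
    (hcov : ∀ x, ∃ i, x ∈ ⋃₀ U i) (x : X) :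
    ((Finset.range k).filter fun j => x ∉ ⋃₀ levelFamily U r j).card ≤ m := by
  set s : ℕ → Set (Fin (m + 1) × Set X) := fun j => nearMembers U (j * r) x with hs_def
  have hs : Monotone s := fun i j h => nearMembers_mono U x (by gcongr)
  have hinj := injOn_fst_nearMembers hU hL x
  have hfin : (s k).Finite := Finite.of_finite_image (toFinite _) hinj
  have hsk : (s k).ncard ≤ m + 1 := by
    rw [← hinj.ncard_image]
    simpa using ncard_le_card (Prod.fst '' s k)
  obtain ⟨i, A, hA, hxA⟩ := hcov x
  have hs0 : 0 < (s 0).ncard :=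
    (ncard_pos (hfin.subset (hs k.zero_le))).2 ⟨_, mem_nearMembers_of_mem (by simp) hA hxA⟩
  have hsub : ((Finset.range k).filter fun j => x ∉ ⋃₀ levelFamily U r j) ⊆
      (Finset.range k).filter fun j => s j ≠ s (j + 1) :=
    Finset.monotone_filter_right _ fun j _ hj hsj => hj (mem_sUnion_levelFamily (by
      simpa [hs_def, add_one_mul] using hsj))
  have hchain := card_filter_ne_succ_add_ncard_le hs hfin
  have hcard := Finset.card_le_card hsub
  omega

open Classical in
theorem exists_levelFamilies {m : ℕ} {c : ℝ} (hX : IsDimControl X m fun r => c * r) (k : ℕ)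
    {r : ℝ} (hr : 0 < r) :
    ∃ G : ℕ → Set (Set X), (∀ j, RDisjoint r (G j)) ∧
      (∀ j < k, FamBounded ((c + 1) * (2 * k + 1) * r) (G j)) ∧
      ∀ x, ((Finset.range k).filter fun j => x ∉ ⋃₀ G j).card ≤ m := by
  obtain ⟨U, hUd, hUb, hcov⟩ := hX ((2 * k + 1) * r) (by positivity)
  refine ⟨levelFamily U r, rDisjoint_levelFamily U r, fun j hj => ?_,
    card_filter_notMem_sUnion_levelFamily_le hr.le hUd (by linarith) hcov⟩
  have hjk : (j : ℝ) * r ≤ (2 * k + 1) * r := by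
    gcongr
    have : (j : ℝ) < k := by exact_mod_cast hj
    linarith
  exact (famBounded_levelFamily hr.le hUb hcov j).mono_s2 (by linarith)

end AssouadNagata

open AssouadNagata Classical in
/-- If `dim_AN X ≤ m` and `dim_AN Y ≤ n`, then the product `X × Y` with the sum metric
satisfies `dim_AN (X × Y) ≤ m + n`. -/
theorem stmt2 {X Y : Type*} [MetricSpace X] [MetricSpace Y] (m n : ℕ)
    (hX : DimANLE X m) (hY : DimANLE Y n) :
    @DimANLE (X × Y) (sumMetric X Y) (m + n) := by
  obtain ⟨cX, hcX, HX⟩ := hX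
  obtain ⟨cY, hcY, HY⟩ := hY
  set k := m + n + 1 with hk
  let := sumMetric X Y
  refine ⟨(cX + 1 + (cY + 1)) * (2 * k + 1), mul_pos (by linarith) (by positivity),
    fun r hr => ?_⟩
  obtain ⟨GX, hGXd, hGXb, hGXc⟩ := exists_levelFamilies HX k hr
  obtain ⟨GY, hGYd, hGYb, hGYc⟩ := exists_levelFamilies HY k hr
  refine ⟨fun i => image2 (· ×ˢ ·) (GX i) (GY i), fun i => (hGXd i).image2_prod (hGYd i),
    fun i => ((hGXb i i.2).image2_prod (hGYb i i.2)).mono_s2 (by linarith), fun p => ?_⟩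
  have hbad : ((Finset.range k).filter fun j => p.1 ∉ ⋃₀ GX j ∨ p.2 ∉ ⋃₀ GY j).card <
      (Finset.range k).card := by
    rw [Finset.filter_or, Finset.card_range]
    linarith [Finset.card_union_le ((Finset.range k).filter fun j => p.1 ∉ ⋃₀ GX j)
      ((Finset.range k).filter fun j => p.2 ∉ ⋃₀ GY j), hGXc p.1, hGYc p.2, hk]
  obtain ⟨j, hjk, hj⟩ := Finset.exists_mem_notMem_of_card_lt_card hbad
  simp only [Finset.mem_filter, not_and, not_or, not_not] at hj
  obtain ⟨⟨A, hA, hpA⟩, B, hB, hpB⟩ := hj hjk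
  exact ⟨⟨j, Finset.mem_range.1 hjk⟩, A ×ˢ B, mem_image2_of_mem hA hB, hpA, hpB⟩
end

section
/- Let X be a metric space and n ≥ 0. Suppose that for every r > 0 there is a subset X_r of X such that asdim(X_r) ≤ n and X ∖ X_r can be written as the union of n+1 subsets each of whose r-components are R-bounded for some common bound R (depending on r). Then asdim(X) ≤ n. -/
open Metric Set

/-- The chain relation generating `r`-components of a subset `A`. -/
def ChainRel {X : Type*} [MetricSpace X] (A : Set X) (r : ℝ) : X → X → Prop :=
  Relation.ReflTransGen (fun a b => b ∈ A ∧ dist a b ≤ r)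

/-- The `r`-components of `A` are `R`-bounded. -/
def CompBounded {X : Type*} [MetricSpace X] (A : Set X) (r R : ℝ) : Prop :=
  ∀ x ∈ A, ∀ y ∈ A, ChainRel A r x y → dist x y ≤ R

/-- `D` is an `n`-dimensional control function for the metric subspace `A`. -/
def IsControlOn {X : Type*} [MetricSpace X] (A : Set X) (n : ℕ) (D : ℝ → ℝ) : Prop :=
  ∀ r > 0, ∃ C : Fin (n + 1) → Set X,
    (∀ i, C i ⊆ A) ∧ A ⊆ (⋃ i, C i) ∧ ∀ i, CompBounded (C i) r (D r)

/-- `asdim A ≤ n`. -/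
def AsdimLE {X : Type*} [MetricSpace X] (A : Set X) (n : ℕ) : Prop :=
  ∃ D : ℝ → ℝ, (∀ r > 0, 0 < D r) ∧ IsControlOn A n D

/-!
Fix `r > 0`, let `C₀, …, Cₙ` cover `X \ Xr` with `R`-bounded `r`-components, and let
`A₀, …, Aₙ` cover `Xr` with `D`-bounded `(2r + R)`-components. Along an `r`-chain in `Aᵢ ∪ Cᵢ`,
a maximal run of points of `Cᵢ` has diameter at most `R`, so consecutive points of `Aᵢ` on the
chain are at distance at most `2r + R`. Hence the points of `Aᵢ` on the chain lie in one
`(2r + R)`-component of `Aᵢ`, and the `r`-components of `Aᵢ ∪ Cᵢ` are `(D + 2(r + R))`-bounded.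
-/

section

variable {X : Type*} [MetricSpace X]

namespace ChainRel

theorem mem_of_mem {C : Set X} {r : ℝ} {x z : X} (hx : x ∈ C) (h : ChainRel C r x z) :
    z ∈ C := by
  induction h with
  | refl => exact hx
  | tail _ step => exact step.1

theorem dist_le_of_mem {C : Set X} {r R : ℝ} {x z : X} (hC : CompBounded C r R) (hx : x ∈ C)
    (h : ChainRel C r x z) : dist x z ≤ R :=
  hC x hx z (h.mem_of_mem hx) h

theorem dist_le_add {C : Set X} {r R : ℝ} {b z : X} (hC : CompBounded C r R) (hr : 0 ≤ r)
    (hR : 0 ≤ R) (h : ChainRel C r b z) : dist b z ≤ r + R := by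
  rcases Relation.ReflTransGen.cases_head h with rfl | ⟨c, ⟨hc, hbc⟩, hcz⟩
  · rw [dist_self]
    positivity
  · calc dist b z ≤ dist b c + dist c z := dist_triangle _ _ _
      _ ≤ r + R := add_le_add hbc (dist_le_of_mem hC hc hcz)

/-- Either the chain never leaves `C`, or it is controlled by a `(2r + R)`-chain in `A` from an
anchor `a` near `x` to the last point `b` of `A` on it, after which it stays in `C`. -/
theorem union_cases {A C : Set X} {r R : ℝ} {x y : X} (hC : CompBounded C r R) (hr : 0 ≤ r)
    (hR : 0 ≤ R) (hx : x ∈ A ∪ C) (h : ChainRel (A ∪ C) r x y) :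
    (x ∈ C ∧ ChainRel C r x y) ∨
      ∃ a ∈ A, ∃ b, dist x a ≤ r + R ∧ ChainRel A (2 * r + R) a b ∧ ChainRel C r b y := by
  induction h with
  | refl =>
    rcases hx with hxA | hxC
    · exact .inr ⟨x, hxA, x, by rw [dist_self]; positivity, .refl, .refl⟩
    · exact .inl ⟨hxC, .refl⟩
  | @tail z y _ step ih =>
    obtain ⟨hyA | hyC, hzy⟩ := step
    · refine .inr ?_
      rcases ih with ⟨hxC, hxz⟩ | ⟨a, haA, b, hxa, hab, hbz⟩
      · refine ⟨y, hyA, y, ?_, .refl, .refl⟩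
        calc dist x y ≤ dist x z + dist z y := dist_triangle _ _ _
          _ ≤ r + R := by linarith [hxz.dist_le_of_mem hC hxC]
      · refine ⟨a, haA, y, hxa, hab.tail ⟨hyA, ?_⟩, .refl⟩
        calc dist b y ≤ dist b z + dist z y := dist_triangle _ _ _
          _ ≤ 2 * r + R := by linarith [hbz.dist_le_add hC hr hR]
    · rcases ih with ⟨hxC, hxz⟩ | ⟨a, haA, b, hxa, hab, hbz⟩
      · exact .inl ⟨hxC, hxz.tail ⟨hyC, hzy⟩⟩
      · exact .inr ⟨a, haA, b, hxa, hab, hbz.tail ⟨hyC, hzy⟩⟩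

end ChainRel

theorem CompBounded.union {A C : Set X} {r R D : ℝ} (hA : CompBounded A (2 * r + R) D)
    (hC : CompBounded C r R) (hr : 0 ≤ r) (hR : 0 ≤ R) (hD : 0 ≤ D) :
    CompBounded (A ∪ C) r (D + 2 * (r + R)) := by
  intro x hx y _ hxy
  rcases hxy.union_cases hC hr hR hx with ⟨hxC, hxy⟩ | ⟨a, haA, b, hxa, hab, hby⟩
  · linarith [hxy.dist_le_of_mem hC hxC]
  · calc dist x y ≤ dist x a + dist a b + dist b y := dist_triangle4 _ _ _ _
      _ ≤ (r + R) + D + (r + R) :=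
        add_le_add_three hxa (hA a haA b (hab.mem_of_mem haA) hab) (hby.dist_le_add hC hr hR)
      _ = D + 2 * (r + R) := by ring

theorem AsdimLE.of_forall {A : Set X} {n : ℕ}
    (h : ∀ r > 0, ∃ B > 0, ∃ C : Fin (n + 1) → Set X,
      (∀ i, C i ⊆ A) ∧ A ⊆ ⋃ i, C i ∧ ∀ i, CompBounded (C i) r B) :
    AsdimLE A n := by
  choose! B hB C hC using h
  exact ⟨B, hB, fun r hr => ⟨C r, hC r hr⟩⟩

end

/-- If for every `r > 0` there is a subset `Xr ⊆ X` with `asdim Xr ≤ n` such that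
`X \ Xr` is the union of `n + 1` subsets whose `r`-components are `R`-bounded for some
common bound `R`, then `asdim X ≤ n`. -/
theorem stmt6 {X : Type*} [MetricSpace X] (n : ℕ)
    (h : ∀ r > 0, ∃ Xr : Set X, AsdimLE Xr n ∧
      ∃ R > 0, ∃ C : Fin (n + 1) → Set X,
        (∀ i, C i ⊆ Xrᶜ) ∧ Xrᶜ ⊆ (⋃ i, C i) ∧ ∀ i, CompBounded (C i) r R) :
    AsdimLE (Set.univ : Set X) n := by
  refine AsdimLE.of_forall fun r hr => ?_
  obtain ⟨Xr, ⟨D, hDpos, hD⟩, R, hR, C, -, hXrC, hC⟩ := h r hr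
  obtain ⟨A, -, hXrA, hA⟩ := hD (2 * r + R) (by positivity)
  refine ⟨D (2 * r + R) + 2 * (r + R), by linarith [hDpos (2 * r + R) (by positivity)],
    fun i => A i ∪ C i, fun i => subset_univ _, ?_, fun i =>
      (hA i).union (hC i) hr.le hR.le (hDpos _ (by positivity)).le⟩
  rw [iUnion_union_distrib, ← union_compl_self Xr]
  exact union_subset_union hXrA hXrC
end

section
/- Let G be a group with a left-invariant metric d, and for every r > 0 let G_r be the subgroup of G generated by the ball B(1_G, r) = {g ∈ G : d(1_G, g) ≤ r}. If asdim(G_r, d) ≤ n for every r > 0, then asdim(G, d) ≤ n. -/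
/-!
Fix a scale `r > 0` and let `H = G_r`. Points at distance at most `r` lie in the same left coset
of `H`, so every `r`-chain stays inside one coset. Choosing a representative `g` of each coset and
translating a decomposition of `H` (taken at scale `r`) by `g` decomposes each coset `gH`
isometrically; the union over all cosets of the `i`-th translated pieces then has `D_r(r)`-bounded
`r`-components, so `r ↦ D_r(r)` is a control function for `G`.
-/

open Metric Set

open scoped Pointwise

section ChainRel

variable {X Y : Type*} [MetricSpace X] [MetricSpace Y]

lemma ChainRel.mono {A B : Set X} {r : ℝ} {x y : X} (hAB : A ⊆ B) (h : ChainRel A r x y) :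
    ChainRel B r x y :=
  Relation.ReflTransGen.mono (fun _ _ hab => ⟨hAB hab.1, hab.2⟩) _ _ h

lemma ChainRel.map {A : Set X} {B : Set Y} {r : ℝ} {x y : X} {f : X → Y}
    (hf : LipschitzWith 1 f) (hAB : MapsTo f A B) (h : ChainRel A r x y) :
    ChainRel B r (f x) (f y) := by
  induction h with
  | refl => exact .refl
  | tail _ hab ih =>
    refine ih.tail ⟨hAB hab.1, le_trans ?_ hab.2⟩
    simpa using hf.dist_le_mul _ _

lemma ChainRel.apply_eq {ι : Type*} {A : Set X} {r : ℝ} {x y : X} {s : X → ι}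
    (hs : ∀ a b, dist a b ≤ r → s a = s b) (h : ChainRel A r x y) : s x = s y := by
  induction h with
  | refl => rfl
  | tail _ hab ih => exact ih.trans (hs _ _ hab.2)

lemma ChainRel.inter_fiber {ι : Type*} {A : Set X} {r : ℝ} {x y : X} {s : X → ι}
    (hs : ∀ a b, dist a b ≤ r → s a = s b) (h : ChainRel A r x y) :
    ChainRel (A ∩ s ⁻¹' {s x}) r x y := by
  induction h with
  | refl => exact .refl
  | tail hxa hab ih =>
    have hb : s x = s _ := (ChainRel.apply_eq hs hxa).trans (hs _ _ hab.2)
    exact ih.tail ⟨⟨hab.1, hb.symm⟩, hab.2⟩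

lemma CompBounded.mono {A B : Set X} {r R : ℝ} (hAB : A ⊆ B) (hB : CompBounded B r R) :
    CompBounded A r R :=
  fun x hx y hy hxy => hB x (hAB hx) y (hAB hy) (hxy.mono hAB)

lemma CompBounded.of_fibers {ι : Type*} {A : Set X} {r R : ℝ} (s : X → ι)
    (hs : ∀ a b, dist a b ≤ r → s a = s b) (hA : ∀ j, CompBounded (A ∩ s ⁻¹' {j}) r R) :
    CompBounded A r R :=
  fun x hx y hy hxy =>
    hA (s x) x ⟨hx, rfl⟩ y ⟨hy, (hxy.apply_eq hs).symm⟩ (hxy.inter_fiber hs)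

end ChainRel

section IsometricAction

variable {G X : Type*} [Group G] [MetricSpace X] [MulAction G X] [IsIsometricSMul G X]

lemma CompBounded.smul {C : Set X} {r R : ℝ} (hC : CompBounded C r R) (g : G) :
    CompBounded (g • C) r R := by
  intro x hx y hy hxy
  have hmaps : MapsTo (g⁻¹ • ·) (g • C) C := fun _ hz => mem_smul_set_iff_inv_smul_mem.mp hz
  have hlip : LipschitzWith 1 (g⁻¹ • · : X → X) := (isometry_smul X g⁻¹).lipschitz
  rw [← dist_smul g⁻¹]
  exact hC _ (hmaps hx) _ (hmaps hy) (hxy.map hlip hmaps)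

end IsometricAction

section Cosets

variable {G : Type*} [Group G]

def cosetSpread (H : Subgroup G) (C : Set G) : Set G :=
  ⋃ q : G ⧸ H, q.out • C

lemma iUnion_cosetSpread_eq_univ {ι : Type*} {H : Subgroup G} {C : ι → Set G}
    (hcov : (H : Set G) ⊆ ⋃ i, C i) : ⋃ i, cosetSpread H (C i) = univ := by
  refine eq_univ_of_forall fun x => ?_
  have hx : (x : G ⧸ H).out⁻¹ * x ∈ H := QuotientGroup.eq.mp (QuotientGroup.out_eq' _)
  obtain ⟨i, hi⟩ := mem_iUnion.mp (hcov hx)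
  refine mem_iUnion.mpr ⟨i, mem_iUnion.mpr ⟨x, ?_⟩⟩
  exact mem_smul_set_iff_inv_smul_mem.mpr hi

lemma cosetSpread_inter_fiber_subset {H : Subgroup G} {C : Set G} (hCH : C ⊆ H)
    (q : G ⧸ H) : cosetSpread H C ∩ QuotientGroup.mk ⁻¹' {q} ⊆ q.out • C := by
  rintro _ ⟨hx, hxq⟩
  obtain ⟨p, c, hc, rfl⟩ := mem_iUnion.mp hx
  simp only [mem_preimage, mem_singleton_iff, smul_eq_mul] at hxq
  have hpq : p = q := by rw [← hxq, QuotientGroup.mk_mul_of_mem _ (hCH hc), QuotientGroup.out_eq']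
  subst hpq
  exact smul_mem_smul_set hc

variable [MetricSpace G] [IsIsometricSMul G G]

lemma QuotientGroup.mk_eq_of_dist_le {r : ℝ} {x y : G} (hxy : dist x y ≤ r) :
    (x : G ⧸ Subgroup.closure (closedBall (1 : G) r)) = y := by
  rw [QuotientGroup.eq]
  apply Subgroup.subset_closure
  have hdist : dist (x⁻¹ * y) 1 = dist y x := by
    simpa only [smul_eq_mul, inv_mul_cancel] using dist_smul x⁻¹ y x
  rw [mem_closedBall, hdist, dist_comm]
  exact hxy

lemma CompBounded.cosetSpread {H : Subgroup G} {C : Set G} {r R : ℝ} (hCH : C ⊆ H)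
    (hH : ∀ x y : G, dist x y ≤ r → (x : G ⧸ H) = y) (hC : CompBounded C r R) :
    CompBounded (cosetSpread H C) r R :=
  .of_fibers QuotientGroup.mk hH fun q =>
    (hC.smul q.out).mono (cosetSpread_inter_fiber_subset hCH q)

end Cosets

/-- Let `G` be a group with a left-invariant metric and for `r > 0` let `G_r` be the
subgroup generated by the closed ball `B(1, r)`. If `asdim G_r ≤ n` (with the restricted
metric) for every `r > 0`, then `asdim G ≤ n`. -/
theorem stmt7 {G : Type*} [Group G] [MetricSpace G]
    (hinv : ∀ g x y : G, dist (g * x) (g * y) = dist x y) (n : ℕ)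
    (h : ∀ r > 0, AsdimLE ((Subgroup.closure (Metric.closedBall (1 : G) r) : Subgroup G) :
      Set G) n) :
    AsdimLE (Set.univ : Set G) n := by
  have : IsIsometricSMul G G := ⟨fun g => Isometry.of_dist_eq (hinv g)⟩
  choose D hDpos hD using h
  refine ⟨fun r => if hr : 0 < r then D r hr r else 1,
    fun r hr => by simpa [hr] using hDpos r hr r hr, fun r hr => ?_⟩
  obtain ⟨C, hCH, hcov, hC⟩ := hD r hr r hr
  refine ⟨fun i => cosetSpread _ (C i), fun _ => subset_univ _,
    (iUnion_cosetSpread_eq_univ hcov).symm.subset, fun i => ?_⟩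
  simpa [hr] using (hC i).cosetSpread (hCH i) fun _ _ => QuotientGroup.mk_eq_of_dist_le
end

section
/- Let X be a metric space, n ≥ 0, and let {X_s}_{s∈S} be a family of subsets of X with X = ⋃_{s∈S} X_s such that one single function D : (0,∞) → (0,∞) is an n-dimensional control function for every metric subspace X_s. Suppose that for every r > 0 there is a subset Y_r of X such that asdim(Y_r) ≤ n and the family {X_s ∖ Y_r}_{s∈S} is r-disjoint, i.e. d(x, x') ≥ r whenever x ∈ X_s ∖ Y_r and x' ∈ X_t ∖ Y_r with s ≠ t. Then asdim(X) ≤ n. -/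
open Metric Set

/-- Union theorem: if `X = ⋃ Xs s` where one single function `D` is an `n`-dimensional
control function of every `Xs s`, and for every `r > 0` there is `Yr ⊆ X` with
`asdim Yr ≤ n` such that the family `{Xs s \ Yr}` is `r`-disjoint, then `asdim X ≤ n`. -/
theorem stmt8 {X : Type*} [MetricSpace X] (n : ℕ) {S : Type*} (Xs : S → Set X)
    (hcover : (⋃ s, Xs s) = Set.univ)
    (D : ℝ → ℝ) (hDpos : ∀ r > 0, 0 < D r) (hD : ∀ s, IsControlOn (Xs s) n D)
    (h : ∀ r > 0, ∃ Yr : Set X, AsdimLE Yr n ∧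
      ∀ s t : S, s ≠ t → ∀ x ∈ Xs s \ Yr, ∀ y ∈ Xs t \ Yr, r ≤ dist x y) :
    AsdimLE (Set.univ : Set X) n := by
  classical
  have key : ∀ r : ℝ, 0 < r → ∃ M : ℝ, 0 < M ∧ ∃ C : Fin (n + 1) → Set X,
      (∀ i, C i ⊆ (Set.univ : Set X)) ∧ (Set.univ : Set X) ⊆ (⋃ i, C i) ∧
      ∀ i, CompBounded (C i) r M := by
    intro r hr
    obtain ⟨Y, ⟨DY, hDYpos, hDYctl⟩, hdisj⟩ := h (r + 1) (by linarith)
    have hRpos : 0 < D r := hDpos r hr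
    have hr₂pos : 0 < D r + 2 * r := by linarith
    obtain ⟨B, hBsub, hBcov, hBbd⟩ := hDYctl (D r + 2 * r) hr₂pos
    have hd'pos : 0 < DY (D r + 2 * r) := hDYpos _ hr₂pos
    choose Cs hCsub hCcov hCbd using fun s => hD s r hr
    refine ⟨DY (D r + 2 * r) + 2 * D r + 2 * r, by linarith,
      fun i => (⋃ s, (Cs s i \ Y)) ∪ B i, fun i => subset_univ _, ?_, ?_⟩
    · intro x _
      have hx : x ∈ ⋃ s, Xs s := hcover ▸ mem_univ x
      obtain ⟨s, hs⟩ := mem_iUnion.mp hx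
      by_cases hxY : x ∈ Y
      · obtain ⟨j, hj⟩ := mem_iUnion.mp (hBcov hxY)
        exact mem_iUnion.mpr ⟨j, Or.inr hj⟩
      · obtain ⟨i, hi⟩ := mem_iUnion.mp (hCcov s hs)
        exact mem_iUnion.mpr ⟨i, Or.inl (mem_iUnion.mpr ⟨s, hi, hxY⟩)⟩
    · intro i x hx y hy hchain
      -- pure `A`-chains end where they started membership-wise
      have hPAend : ∀ s : S, ∀ w z : X, w ∈ Cs s i → w ∉ Y →
          Relation.ReflTransGen (fun a b => (b ∈ Cs s i ∧ b ∉ Y) ∧ dist a b ≤ r) w z →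
          z ∈ Cs s i ∧ z ∉ Y := by
        intro s w z hw hwY hch
        induction hch with
        | refl => exact ⟨hw, hwY⟩
        | tail _ hstep _ => exact ⟨hstep.1.1, hstep.1.2⟩
      have hPAdist : ∀ s : S, ∀ w z : X, w ∈ Cs s i → w ∉ Y →
          Relation.ReflTransGen (fun a b => (b ∈ Cs s i ∧ b ∉ Y) ∧ dist a b ≤ r) w z →
          dist w z ≤ D r := by
        intro s w z hw hwY hch
        have hz := hPAend s w z hw hwY hch
        exact hCbd s i w hw z hz.1 (Relation.ReflTransGen.mono (p := fun a b => b ∈ Cs s i ∧ dist a b ≤ r) (fun a b hab => ⟨hab.1.1, hab.2⟩) w z hch)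
      have hchain' : Relation.ReflTransGen
          (fun a b => b ∈ ((⋃ s, (Cs s i \ Y)) ∪ B i) ∧ dist a b ≤ r) x y := hchain
      have main : ∀ z : X, Relation.ReflTransGen
          (fun a b => b ∈ ((⋃ s, (Cs s i \ Y)) ∪ B i) ∧ dist a b ≤ r) x z →
          ((∃ s, x ∈ Cs s i ∧ x ∉ Y ∧ Relation.ReflTransGen
              (fun a b => (b ∈ Cs s i ∧ b ∉ Y) ∧ dist a b ≤ r) x z)
           ∨ (∃ b, b ∈ B i ∧ dist x b ≤ D r + r ∧ z ∈ B i ∧ Relation.ReflTransGen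
              (fun a b' => b' ∈ B i ∧ dist a b' ≤ D r + 2 * r) b z)
           ∨ (∃ b c s w, b ∈ B i ∧ c ∈ B i ∧ dist x b ≤ D r + r ∧
                Relation.ReflTransGen
                  (fun a b' => b' ∈ B i ∧ dist a b' ≤ D r + 2 * r) b c ∧
                dist c w ≤ r ∧ w ∈ Cs s i ∧ w ∉ Y ∧ Relation.ReflTransGen
                  (fun a b => (b ∈ Cs s i ∧ b ∉ Y) ∧ dist a b ≤ r) w z)) := by
        intro z hz
        induction hz with
        | refl =>
          rcases hx with hxA | hxB
          · obtain ⟨s, hs⟩ := mem_iUnion.mp hxA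
            exact Or.inl ⟨s, hs.1, hs.2, Relation.ReflTransGen.refl⟩
          · refine Or.inr (Or.inl ⟨x, hxB, ?_, hxB, Relation.ReflTransGen.refl⟩)
            rw [dist_self]; linarith
        | @tail y' z' hch hstep ih =>
          obtain ⟨hz'C, hyz⟩ := hstep
          by_cases hzB : z' ∈ B i
          · rcases ih with ⟨s, hxs, hxsY, hch₁⟩ | ⟨b, hb, hxb, hyB, hbch⟩ |
              ⟨b, c, s, w, hb, hc, hxb, hbc, hcw, hw, hwY, hwch⟩
            · have hxy : dist x y' ≤ D r := hPAdist s x y' hxs hxsY hch₁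
              refine Or.inr (Or.inl ⟨z', hzB, ?_, hzB, Relation.ReflTransGen.refl⟩)
              calc dist x z' ≤ dist x y' + dist y' z' := dist_triangle _ _ _
                _ ≤ D r + r := by linarith
            · exact Or.inr (Or.inl ⟨b, hb, hxb, hzB, hbch.tail ⟨hzB, by linarith⟩⟩)
            · have hwy : dist w y' ≤ D r := hPAdist s w y' hw hwY hwch
              refine Or.inr (Or.inl ⟨b, hb, hxb, hzB, hbc.tail ⟨hzB, ?_⟩⟩)
              calc dist c z' ≤ dist c w + dist w y' + dist y' z' := dist_triangle4 _ _ _ _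
                _ ≤ D r + 2 * r := by linarith
          · have hzA : z' ∈ ⋃ s, (Cs s i \ Y) := hz'C.resolve_right hzB
            obtain ⟨t, hzt, hztY⟩ := mem_iUnion.mp hzA
            rcases ih with ⟨s, hxs, hxsY, hch₁⟩ | ⟨b, hb, hxb, hyB, hbch⟩ |
              ⟨b, c, s, w, hb, hc, hxb, hbc, hcw, hw, hwY, hwch⟩
            · have hy' := hPAend s x y' hxs hxsY hch₁
              by_cases hst : s = t
              · subst hst
                exact Or.inl ⟨s, hxs, hxsY, hch₁.tail ⟨⟨hzt, hztY⟩, hyz⟩⟩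
              · exfalso
                have := hdisj s t hst y' ⟨hCsub s i hy'.1, hy'.2⟩ z' ⟨hCsub t i hzt, hztY⟩
                linarith
            · exact Or.inr (Or.inr ⟨b, y', t, z', hb, hyB, hxb, hbch, hyz, hzt, hztY,
                Relation.ReflTransGen.refl⟩)
            · have hy' := hPAend s w y' hw hwY hwch
              by_cases hst : s = t
              · subst hst
                exact Or.inr (Or.inr ⟨b, c, s, w, hb, hc, hxb, hbc, hcw, hw, hwY,
                  hwch.tail ⟨⟨hzt, hztY⟩, hyz⟩⟩)
              · exfalso
                have := hdisj s t hst y' ⟨hCsub s i hy'.1, hy'.2⟩ z' ⟨hCsub t i hzt, hztY⟩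
                linarith
      rcases main y hchain' with ⟨s, hxs, hxsY, hch₁⟩ | ⟨b, hb, hxb, hyB, hbch⟩ |
        ⟨b, c, s, w, hb, hc, hxb, hbc, hcw, hw, hwY, hwch⟩
      · have := hPAdist s x y hxs hxsY hch₁
        linarith
      · have hby : dist b y ≤ DY (D r + 2 * r) := hBbd i b hb y hyB hbch
        calc dist x y ≤ dist x b + dist b y := dist_triangle _ _ _
          _ ≤ DY (D r + 2 * r) + 2 * D r + 2 * r := by linarith
      · have hbc' : dist b c ≤ DY (D r + 2 * r) := hBbd i b hb c hc hbc
        have hwy : dist w y ≤ D r := hPAdist s w y hw hwY hwch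
        calc dist x y ≤ dist x b + dist b c + dist c y := dist_triangle4 _ _ _ _
          _ ≤ dist x b + dist b c + (dist c w + dist w y) := by
              linarith [dist_triangle c w y]
          _ ≤ DY (D r + 2 * r) + 2 * D r + 2 * r := by linarith

  choose! M hMpos hMctl using key
  exact ⟨M, hMpos, hMctl⟩
end

section
/- There exist metric spaces X and Y and a Lipschitz function f : X → Y such that asdim(Y) ≤ 0, the preimage f⁻¹(B) of every bounded subset B of Y is bounded (so in particular asdim(f⁻¹(B)) ≤ 0 for every bounded B ⊆ Y), and yet asdim(X) > 0, i.e. X admits no 0-dimensional control function. -/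
open Metric Set

def Xc : Type := Σ n : ℕ, Fin (n + 1)
def Yc : Type := ℕ

def Yc.toNat : Yc → ℕ := id

noncomputable def eX : Xc → ℝ := fun x => 4 ^ x.1 + x.2.val
noncomputable def eY : Yc → ℝ := fun n => 4 ^ n.toNat

lemma nat_lt_pow4 (n : ℕ) : (n : ℝ) < 4 ^ n := by
  exact_mod_cast (Nat.lt_pow_self (by norm_num : 1 < 4) : n < 4 ^ n)

lemma pow4_mono {m n : ℕ} (h : m ≤ n) : (4:ℝ) ^ m ≤ 4 ^ n :=
  pow_le_pow_right₀ (by norm_num) h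

lemma pow4_pos (n : ℕ) : (0:ℝ) < 4 ^ n := by positivity

lemma eX_inj : Function.Injective eX := by
  rintro ⟨n, k⟩ ⟨m, j⟩ h
  simp only [eX] at h
  have hk : (k.val : ℝ) ≤ n := by exact_mod_cast Nat.lt_succ_iff.mp k.isLt
  have hj : (j.val : ℝ) ≤ m := by exact_mod_cast Nat.lt_succ_iff.mp j.isLt
  have hnm : n = m := by
    by_contra hne
    rcases Nat.lt_or_ge n m with hlt | hge
    · have h1 : (4:ℝ)^(n+1) ≤ 4^m := pow4_mono hlt
      have h2 : (n:ℝ) < 4^n := nat_lt_pow4 n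
      have h3 : (4:ℝ)^(n+1) = 4 * 4^n := by ring
      nlinarith [j.val.cast_nonneg (α := ℝ)]
    · have hlt : m < n := lt_of_le_of_ne hge (Ne.symm hne)
      have h1 : (4:ℝ)^(m+1) ≤ 4^n := pow4_mono hlt
      have h2 : (m:ℝ) < 4^m := nat_lt_pow4 m
      have h3 : (4:ℝ)^(m+1) = 4 * 4^m := by ring
      nlinarith [k.val.cast_nonneg (α := ℝ)]
  subst hnm
  have hkj : (k.val : ℝ) = j.val := by linarith [add_left_cancel h]
  have hkj' : k.val = j.val := by exact_mod_cast hkj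
  exact congrArg (fun t => (⟨n, t⟩ : Xc)) (Fin.ext hkj')

lemma eY_inj : Function.Injective eY := by
  intro a b h
  have := pow_right_injective₀ (a := (4:ℝ)) (by norm_num) (by norm_num) h
  exact this

noncomputable instance : MetricSpace Xc := MetricSpace.induced eX eX_inj inferInstance
noncomputable instance : MetricSpace Yc := MetricSpace.induced eY eY_inj inferInstance

lemma distX (x y : Xc) : dist x y = |eX x - eX y| := rfl
lemma distY (x y : Yc) : dist x y = |eY x - eY y| := rfl

def fXY : Xc → Yc := fun x => x.1

def mkX (n : ℕ) (k : Fin (n + 1)) : Xc := ⟨n, k⟩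

/-- any nontrivial step of length ≤ r in Y forces both endpoints small -/
lemma step_bound {r : ℝ} {a b : Yc} (hne : a ≠ b) (hd : dist a b ≤ r) :
    eY a ≤ 4/3 * r ∧ eY b ≤ 4/3 * r := by
  rw [distY] at hd
  have key : ∀ m n : ℕ, m < n → |(4:ℝ)^m - 4^n| ≤ r → (4:ℝ)^n ≤ 4/3 * r := by
    intro m n hlt habs
    obtain ⟨p, rfl⟩ : ∃ p, n = p + 1 := ⟨n - 1, by omega⟩
    have h1 : (4:ℝ)^m ≤ 4^p := pow4_mono (by omega)
    have h2 : (4:ℝ)^(p+1) = 4 * 4^p := by ring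
    have h3 : |(4:ℝ)^m - 4^(p+1)| = 4^(p+1) - 4^m := by
      rw [abs_sub_comm, abs_of_nonneg]; linarith [pow4_pos p]
    rw [h3] at habs
    linarith
  rcases Nat.lt_or_ge a.toNat b.toNat with hlt | hge
  · have hb := key _ _ hlt hd
    have : eY a ≤ eY b := pow4_mono hlt.le
    exact ⟨le_trans this hb, hb⟩
  · have hlt : b.toNat < a.toNat := by
      rcases Nat.lt_or_ge b.toNat a.toNat with h | h
      · exact h
      · exact absurd (show a = b from Nat.le_antisymm h hge) hne
    rw [abs_sub_comm] at hd
    have ha := key _ _ hlt hd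
    have : eY b ≤ eY a := pow4_mono hlt.le
    exact ⟨ha, le_trans this ha⟩

lemma chainY {r : ℝ} {x y : Yc} (h : ChainRel (univ : Set Yc) r x y) :
    y = x ∨ (eY x ≤ 4/3 * r ∧ eY y ≤ 4/3 * r) := by
  induction h with
  | refl => exact Or.inl rfl
  | @tail b c hab hbc ih =>
    by_cases hbc' : b = c
    · subst hbc'; exact ih
    · have hstep := step_bound hbc' hbc.2
      rcases ih with h | h
      · subst h; exact Or.inr ⟨hstep.1, hstep.2⟩
      · exact Or.inr ⟨h.1, hstep.2⟩

lemma asdimY : AsdimLE (Set.univ : Set Yc) 0 := by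
  refine ⟨fun r => 2 * r, fun r hr => by show (0:ℝ) < 2 * r; linarith,
    fun r hr => ⟨fun _ => univ, ?_, ?_, ?_⟩⟩
  · intro i; exact subset_rfl
  · intro z _; exact mem_iUnion.mpr ⟨0, mem_univ z⟩
  · intro i x _ y _ hch
    show dist x y ≤ 2 * r
    rcases chainY hch with h | ⟨h1, h2⟩
    · subst h; rw [dist_self]; linarith
    · rw [distY]
      have hpx := pow4_pos x.toNat
      have hpy := pow4_pos y.toNat
      simp only [eY] at h1 h2 ⊢
      rw [abs_le]
      exact ⟨by linarith, by linarith⟩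

lemma eX_mk (n : ℕ) (k : Fin (n+1)) : eX ⟨n, k⟩ = 4 ^ n + k.val := rfl

lemma eX_mkX (n : ℕ) (k : Fin (n+1)) : eX (mkX n k) = 4 ^ n + k.val := rfl

lemma fXY_mkX (n : ℕ) (k : Fin (n+1)) : fXY (mkX n k) = (n : Yc) := rfl

lemma lipschitz2 (x y : Xc) : dist (fXY x) (fXY y) ≤ 2 * dist x y := by
  obtain ⟨n, k⟩ := x
  obtain ⟨m, j⟩ := y
  have hk : (k.val : ℝ) ≤ n := by exact_mod_cast Nat.lt_succ_iff.mp k.isLt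
  have hj : (j.val : ℝ) ≤ m := by exact_mod_cast Nat.lt_succ_iff.mp j.isLt
  have hk0 : (0:ℝ) ≤ k.val := k.val.cast_nonneg
  have hj0 : (0:ℝ) ≤ j.val := j.val.cast_nonneg
  show dist (fXY (mkX n k)) (fXY (mkX m j)) ≤ 2 * dist (mkX n k) (mkX m j)
  rw [distX, distY, eX_mkX, eX_mkX]
  show |eY n - eY m| ≤ _
  simp only [eY, Yc.toNat, id]
  rcases lt_trichotomy n m with hlt | heq | hgt
  · have h1 : (4:ℝ)^(n+1) ≤ 4^m := pow4_mono hlt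
    have h2 : (n:ℝ) < 4^n := nat_lt_pow4 n
    have h3 : (4:ℝ)^(n+1) = 4 * 4^n := by ring
    have e1 : |(4:ℝ)^n - 4^m| = 4^m - 4^n := by
      rw [abs_sub_comm, abs_of_nonneg]; linarith
    have e2 : |(4:ℝ)^n + k.val - (4^m + j.val)| = 4^m + j.val - (4^n + k.val) := by
      rw [abs_sub_comm, abs_of_nonneg]; linarith
    rw [e1, e2]; linarith
  · subst heq
    have : |(4:ℝ)^n - 4^n| = 0 := by simp
    rw [this]
    positivity
  · have h1 : (4:ℝ)^(m+1) ≤ 4^n := pow4_mono hgt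
    have h2 : (m:ℝ) < 4^m := nat_lt_pow4 m
    have h3 : (4:ℝ)^(m+1) = 4 * 4^m := by ring
    have e1 : |(4:ℝ)^n - 4^m| = 4^n - 4^m := by
      rw [abs_of_nonneg]; linarith
    have e2 : |(4:ℝ)^n + k.val - (4^m + j.val)| = 4^n + k.val - (4^m + j.val) := by
      rw [abs_of_nonneg]; linarith
    rw [e1, e2]; linarith

lemma preimage_bounded {B : Set Yc} (hB : Bornology.IsBounded B) :
    Bornology.IsBounded (fXY ⁻¹' B) := by
  rcases (fXY ⁻¹' B).eq_empty_or_nonempty with he | ⟨x0, hx0⟩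
  · rw [he]; exact Bornology.isBounded_empty
  obtain ⟨C, hC⟩ := Metric.isBounded_iff.mp hB
  obtain ⟨n0, k0⟩ := x0
  rw [Metric.isBounded_iff]
  have hbd : ∀ x ∈ fXY ⁻¹' B, dist x (mkX n0 k0) ≤ 2 * C + 2 * 4 ^ n0 := by
    rintro ⟨n, k⟩ hx
    have hd : dist (fXY (mkX n k)) (fXY (mkX n0 k0)) ≤ C := hC hx hx0
    rw [distY] at hd
    rw [fXY_mkX, fXY_mkX] at hd
    simp only [eY, Yc.toNat, id] at hd
    have hd' := abs_le.mp hd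
    have hk : (k.val : ℝ) ≤ n := by exact_mod_cast Nat.lt_succ_iff.mp k.isLt
    have hk0 : (k0.val : ℝ) ≤ n0 := by exact_mod_cast Nat.lt_succ_iff.mp k0.isLt
    have h1 : (n:ℝ) < 4^n := nat_lt_pow4 n
    have h2 : (n0:ℝ) < 4^n0 := nat_lt_pow4 n0
    show dist (mkX n k) (mkX n0 k0) ≤ _
    rw [distX, eX_mkX, eX_mkX, abs_le]
    have := k.val.cast_nonneg (α := ℝ)
    have := k0.val.cast_nonneg (α := ℝ)
    constructor <;> linarith
  refine ⟨2 * (2 * C + 2 * 4 ^ n0), fun x hx y hy => ?_⟩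
  calc dist x y ≤ dist x (mkX n0 k0) + dist (mkX n0 k0) y := dist_triangle _ _ _
    _ ≤ (2 * C + 2 * 4 ^ n0) + (2 * C + 2 * 4 ^ n0) := by
        have := hbd y hy
        rw [dist_comm] at this
        linarith [hbd x hx]
    _ = 2 * (2 * C + 2 * 4 ^ n0) := by ring

lemma asdim_preimage {B : Set Yc} (hB : Bornology.IsBounded B) :
    AsdimLE (fXY ⁻¹' B) 0 := by
  obtain ⟨C, hC⟩ := Metric.isBounded_iff.mp (preimage_bounded hB)
  refine ⟨fun _ => max C 0 + 1, fun r hr => by positivity, fun r hr => ⟨fun _ => fXY ⁻¹' B, fun _ => subset_rfl, fun z hz => mem_iUnion.mpr ⟨0, hz⟩, ?_⟩⟩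
  intro i x hx y hy _
  calc dist x y ≤ C := hC hx hy
    _ ≤ max C 0 + 1 := by
        have := le_max_left C 0
        linarith

lemma chain_block (n : ℕ) (S : Set Xc) (hS : ∀ z : Xc, z ∈ S) :
    ∀ k : ℕ, (hk : k ≤ n) → ChainRel S 1 ⟨n, 0⟩ ⟨n, ⟨k, by omega⟩⟩ := by
  intro k
  induction k with
  | zero => intro _; exact Relation.ReflTransGen.refl
  | succ p ih =>
    intro hk
    refine Relation.ReflTransGen.tail (ih (by omega)) ⟨hS _, ?_⟩
    show dist (mkX n ⟨p, by omega⟩) (mkX n ⟨p + 1, by omega⟩) ≤ 1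
    rw [distX, eX_mkX, eX_mkX]
    push_cast
    rw [abs_of_nonpos (by linarith)]
    ring_nf
    norm_num

lemma not_asdimX : ¬ AsdimLE (Set.univ : Set Xc) 0 := by
  rintro ⟨D, hD, hctl⟩
  obtain ⟨C, hsub, hcov, hbd⟩ := hctl 1 one_pos
  obtain ⟨n, hn⟩ := exists_nat_gt (D 1)
  have hall : ∀ z : Xc, z ∈ C 0 := by
    intro z
    obtain ⟨i, hi⟩ := mem_iUnion.mp (hcov (mem_univ z))
    rwa [show i = 0 from Fin.ext (by omega)] at hi
  have hch := chain_block n (C 0) hall n le_rfl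
  have := hbd 0 _ (hall _) _ (hall _) hch
  change dist (mkX n 0) (mkX n ⟨n, by omega⟩) ≤ D 1 at this
  rw [distX, eX_mkX, eX_mkX] at this
  simp only [Fin.val_zero] at this
  rw [show |(4:ℝ)^n + (0:ℕ) - (4^n + ((⟨n, by omega⟩ : Fin (n+1)).val : ℝ))| = n by
    simp [abs_of_nonpos]] at this
  linarith

/-- There exist metric spaces `X`, `Y` and a Lipschitz function `f : X → Y` such that
`asdim Y ≤ 0`, preimages of bounded sets are bounded (in particular `asdim (f⁻¹ B) ≤ 0`
for every bounded `B ⊆ Y`), and yet `X` admits no `0`-dimensional control function. -/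
theorem stmt9 : ∃ (X Y : Type) (_ : MetricSpace X) (_ : MetricSpace Y) (f : X → Y),
    (∃ L : ℝ, 0 ≤ L ∧ ∀ x y : X, dist (f x) (f y) ≤ L * dist x y) ∧
    AsdimLE (Set.univ : Set Y) 0 ∧
    (∀ B : Set Y, Bornology.IsBounded B → Bornology.IsBounded (f ⁻¹' B)) ∧
    (∀ B : Set Y, Bornology.IsBounded B → AsdimLE (f ⁻¹' B) 0) ∧
    ¬ AsdimLE (Set.univ : Set X) 0 := by
  exact ⟨Xc, Yc, inferInstance, inferInstance, fXY,
    ⟨2, by norm_num, lipschitz2⟩, asdimY,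
    fun B hB => preimage_bounded hB, fun B hB => asdim_preimage hB, not_asdimX⟩
end

section
/- Let f : X → Y be a function of metric spaces and m ≥ 0. Suppose that every subset A ⊆ X such that the metric subspace f(A) has asdim(f(A)) ≤ 0 satisfies asdim(A) ≤ m. Then f admits an m-dimensional control function D_f : (0,∞) × (0,∞) → (0,∞). -/
open Metric Set

/-- The image `f '' A` has diameter at most `RY`. -/
def ImDiamLE {X Y : Type*} [MetricSpace X] [MetricSpace Y] (f : X → Y) (A : Set X)
    (RY : ℝ) : Prop :=
  ∀ x ∈ A, ∀ y ∈ A, dist (f x) (f y) ≤ RY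

/-- `D` is an `m`-dimensional control function of `f : X → Y`: for all `rX, RY > 0`,
every subset `A ⊆ X` whose image has diameter at most `RY` is the union of `m + 1` sets
whose `rX`-components are `D rX RY`-bounded. -/
def IsFnControl {X Y : Type*} [MetricSpace X] [MetricSpace Y] (f : X → Y) (m : ℕ)
    (D : ℝ → ℝ → ℝ) : Prop :=
  ∀ rX > 0, ∀ RY > 0, ∀ A : Set X, ImDiamLE f A RY →
    ∃ C : Fin (m + 1) → Set X,
      (∀ i, C i ⊆ A) ∧ A ⊆ (⋃ i, C i) ∧ ∀ i, CompBounded (C i) rX (D rX RY)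

/-- Auxiliary: a decomposition of `A` into `m+1` pieces with `r`-components `B`-bounded. -/
def MyDecomp {X : Type*} [MetricSpace X] (m : ℕ) (A : Set X) (r B : ℝ) : Prop :=
  ∃ C : Fin (m + 1) → Set X,
    (∀ i, C i ⊆ A) ∧ A ⊆ (⋃ i, C i) ∧ ∀ i, CompBounded (C i) r B

lemma chainRel_mono {X : Type*} [MetricSpace X] {A B : Set X} {r : ℝ} {x y : X}
    (hAB : A ⊆ B) (h : ChainRel A r x y) : ChainRel B r x y :=
  Relation.ReflTransGen.mono (p := fun a b => b ∈ B ∧ dist a b ≤ r)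
    (fun _ _ hab => ⟨hAB hab.1, hab.2⟩) _ _ h

lemma compBounded_subset {X : Type*} [MetricSpace X] {A B : Set X} {r R : ℝ}
    (hAB : A ⊆ B) (h : CompBounded B r R) : CompBounded A r R :=
  fun x hx y hy hc => h x (hAB hx) y (hAB hy) (chainRel_mono hAB hc)

lemma compBounded_mono {X : Type*} [MetricSpace X] {A : Set X} {r R R' : ℝ}
    (hRR : R ≤ R') (h : CompBounded A r R) : CompBounded A r R' :=
  fun x hx y hy hc => (h x hx y hy hc).trans hRR

lemma myDecomp_mono {X : Type*} [MetricSpace X] {m : ℕ} {A : Set X} {r B B' : ℝ}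
    (hBB : B ≤ B') (h : MyDecomp m A r B) : MyDecomp m A r B' := by
  obtain ⟨C, h1, h2, h3⟩ := h
  exact ⟨C, h1, h2, fun i => compBounded_mono hBB (h3 i)⟩

lemma myDecomp_subset {X : Type*} [MetricSpace X] {m : ℕ} {A A' : Set X} {r B : ℝ}
    (hA : A' ⊆ A) (h : MyDecomp m A r B) : MyDecomp m A' r B := by
  obtain ⟨C, h1, h2, h3⟩ := h
  refine ⟨fun i => C i ∩ A', fun i => Set.inter_subset_right, ?_,
    fun i => compBounded_subset Set.inter_subset_left (h3 i)⟩
  intro x hx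
  obtain ⟨i, hi⟩ := Set.mem_iUnion.mp (h2 (hA hx))
  exact Set.mem_iUnion.mpr ⟨i, hi, hx⟩

lemma asdimLE_zero_aux {Y : Type*} [MetricSpace Y] (S : Set Y) (D : ℝ → ℝ)
    (hpos : ∀ r > 0, 0 < D r) (hcb : ∀ r > 0, CompBounded S r (D r)) : AsdimLE S 0 :=
  ⟨D, hpos, fun r hr =>
    ⟨fun _ => S, fun _ => subset_rfl, Set.subset_iUnion (fun _ : Fin 1 => S) 0,
      fun _ => hcb r hr⟩⟩

/-- If every subset `A ⊆ X` with `asdim (f '' A) ≤ 0` satisfies `asdim A ≤ m`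
(i.e. `asdim f ≤ m`), then `f` admits an `m`-dimensional control function. -/
theorem stmt10 {X Y : Type*} [MetricSpace X] [MetricSpace Y] (f : X → Y) (m : ℕ)
    (h : ∀ A : Set X, AsdimLE (f '' A) 0 → AsdimLE A m) :
    ∃ D : ℝ → ℝ → ℝ, (∀ rX > 0, ∀ RY > 0, 0 < D rX RY) ∧ IsFnControl f m D := by
  classical
  have main : ∀ rX : ℝ, 0 < rX → ∀ RY : ℝ, 0 < RY →
      ∃ B : ℝ, 0 < B ∧ ∀ A : Set X, ImDiamLE f A RY → MyDecomp m A rX B := by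
    intro rX hrX RY hRY
    by_contra hcon
    push_neg at hcon
    -- for every bound, some set of bounded image diameter fails it
    have hfail : ∀ B : ℝ, ∃ A : Set X, ImDiamLE f A RY ∧ ¬ MyDecomp m A rX B := by
      intro B
      obtain ⟨A, h1, h2⟩ := hcon (max B 1) (lt_of_lt_of_le one_pos (le_max_right _ _))
      exact ⟨A, h1, fun hd => h2 (myDecomp_mono (le_max_left _ _) hd)⟩
    -- a basepoint
    obtain ⟨A₁, hA₁im, hA₁f⟩ := hfail 1
    have hA₁ne : A₁.Nonempty := by
      rcases A₁.eq_empty_or_nonempty with rfl | hne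
      · exact absurd (⟨fun _ => (∅ : Set X), fun _ => subset_rfl, by simp,
          fun i x hx => absurd hx (Set.notMem_empty x)⟩ : MyDecomp m ∅ rX 1) hA₁f
      · exact hne
    set x₀ : X := hA₁ne.choose with hx₀
    set y₀ : Y := f x₀ with hy₀
    -- the union of all sets failing bound `B`
    set TT : ℝ → Set X := fun B =>
      ⋃₀ {A : Set X | ImDiamLE f A RY ∧ ¬ MyDecomp m A rX B} with hTTdef
    by_cases hcase : ∃ B M : ℝ, ∀ x ∈ TT B, dist (f x) y₀ ≤ M
    · -- bounded case
      obtain ⟨B, M, hM⟩ := hcase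
      have hcb : ∀ r > 0, CompBounded (f '' TT B) r (max (2 * M) 1) := by
        intro r hr p hp q hq _
        obtain ⟨zp, hzp, rfl⟩ := hp
        obtain ⟨zq, hzq, rfl⟩ := hq
        have h1 := hM zp hzp
        have h2 := hM zq hzq
        have h3 := dist_triangle (f zp) y₀ (f zq)
        have h4 : dist y₀ (f zq) = dist (f zq) y₀ := dist_comm _ _
        have : dist (f zp) (f zq) ≤ 2 * M := by linarith
        exact this.trans (le_max_left _ _)
      have h0 : AsdimLE (f '' TT B) 0 :=
        asdimLE_zero_aux _ (fun _ => max (2 * M) 1)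
          (fun r _ => lt_of_lt_of_le one_pos (le_max_right _ _)) hcb
      obtain ⟨DT, _, hDT⟩ := h (TT B) h0
      have hd : MyDecomp m (TT B) rX (DT rX) := hDT rX hrX
      set B' : ℝ := max B (DT rX) + 1 with hB'
      obtain ⟨A, hAim, hAfail⟩ := hfail B'
      have hBB' : B ≤ B' := (le_max_left _ _).trans (le_add_of_nonneg_right zero_le_one)
      have hsub : A ⊆ TT B := by
        intro x hx
        refine ⟨A, ⟨hAim, fun hdec => hAfail (myDecomp_mono hBB' hdec)⟩, hx⟩
      have hDTB' : DT rX ≤ B' := (le_max_right B _).trans (le_add_of_nonneg_right zero_le_one)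
      exact hAfail (myDecomp_mono hDTB' (myDecomp_subset hsub hd))
    · -- unbounded case
      push_neg at hcase
      have hstep : ∀ (k : ℕ) (p : X), ∃ z : X × Set X, z.1 ∈ z.2 ∧ ImDiamLE f z.2 RY ∧
          ¬ MyDecomp m z.2 rX (k : ℝ) ∧ (k : ℝ) + dist (f p) y₀ < dist (f z.1) y₀ := by
        intro k p
        obtain ⟨x, hxT, hxd⟩ := hcase (k : ℝ) ((k : ℝ) + dist (f p) y₀)
        obtain ⟨A, ⟨hAim, hAf⟩, hxA⟩ := hxT
        exact ⟨(x, A), hxA, hAim, hAf, hxd⟩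
      set seq : ℕ → X × Set X := fun k => Nat.rec (Classical.choose (hstep 0 x₀))
        (fun n ih => Classical.choose (hstep (n + 1) ih.1)) k with hseqdef
      have hseq : ∀ k : ℕ, (seq k).1 ∈ (seq k).2 ∧ ImDiamLE f (seq k).2 RY ∧
          ¬ MyDecomp m (seq k).2 rX (k : ℝ) := by
        intro k
        cases k with
        | zero =>
          have hs := Classical.choose_spec (hstep 0 x₀)
          exact ⟨hs.1, hs.2.1, hs.2.2.1⟩
        | succ n =>
          have hs := Classical.choose_spec (hstep (n + 1) (seq n).1)
          exact ⟨hs.1, hs.2.1, hs.2.2.1⟩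
      set ctr : ℕ → Y := fun k => f (seq k).1 with hctr
      have hseqsucc : ∀ n : ℕ, seq (n + 1) = Classical.choose (hstep (n + 1) (seq n).1) :=
        fun n => rfl
      have hgrow : ∀ n : ℕ, ((n : ℝ) + 1) + dist (ctr n) y₀ < dist (ctr (n + 1)) y₀ := by
        intro n
        have hs := (Classical.choose_spec (hstep (n + 1) (seq n).1)).2.2.2
        show ((n : ℝ) + 1) + dist (f (seq n).1) y₀ < dist (f (seq (n + 1)).1) y₀
        rw [hseqsucc n, show ((n : ℝ) + 1) = (((n + 1 : ℕ)) : ℝ) by push_cast; ring]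
        exact hs
      have hmono : Monotone fun k => dist (ctr k) y₀ := by
        apply monotone_nat_of_le_succ
        intro n
        have h1 := hgrow n
        have h2 : (0 : ℝ) ≤ (n : ℝ) + 1 := by positivity
        linarith
      have hsep : ∀ j k : ℕ, j < k → (k : ℝ) ≤ dist (ctr j) (ctr k) := by
        intro j k hjk
        obtain ⟨n, rfl⟩ := Nat.exists_eq_add_of_lt hjk
        set K := j + n + 1 with hK
        have h1 : ((K - 1 : ℕ) : ℝ) + 1 + dist (ctr (K - 1)) y₀ < dist (ctr K) y₀ := by
          have := hgrow (K - 1)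
          simpa [hK] using this
        have h2 : dist (ctr j) y₀ ≤ dist (ctr (K - 1)) y₀ := by
          apply hmono
          omega
        have h3 := dist_triangle (ctr K) (ctr j) y₀
        have h4 : dist (ctr K) (ctr j) = dist (ctr j) (ctr K) := dist_comm _ _
        have h5 : ((K - 1 : ℕ) : ℝ) + 1 = (K : ℝ) := by
          have : (1:ℕ) ≤ K := by omega
          push_cast [Nat.cast_sub this]
          ring
        rw [h5] at h1
        linarith
      -- the big set
      have hcen : ∀ (k : ℕ), ∀ p ∈ f '' (seq k).2, dist p (ctr k) ≤ RY := by
        rintro k p ⟨z, hz, rfl⟩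
        exact (hseq k).2.1 z hz (seq k).1 (hseq k).1
      have himg : f '' (⋃ k, (seq k).2) = ⋃ k, f '' (seq k).2 := Set.image_iUnion
      have hcb : ∀ r > 0, CompBounded (f '' (⋃ k, (seq k).2)) r
          (2 * RY + 2 * dist (ctr ⌈r + 2 * RY⌉₊) y₀) := by
        intro r hr x hx y hy hchain
        rw [himg, Set.mem_iUnion] at hx
        obtain ⟨k₀, hxk⟩ := hx
        clear hy
        have key : ∃ j, y ∈ f '' (seq j).2 ∧
            (j = k₀ ∨ ((j : ℝ) ≤ r + 2 * RY ∧ (k₀ : ℝ) ≤ r + 2 * RY)) := by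
          unfold ChainRel at hchain
          induction hchain with
          | refl => exact ⟨k₀, hxk, Or.inl rfl⟩
          | @tail b q hab hbq ih =>
            obtain ⟨j, hbj, hj⟩ := ih
            obtain ⟨hqS, hdq⟩ := hbq
            rw [himg, Set.mem_iUnion] at hqS
            obtain ⟨j', hqj'⟩ := hqS
            by_cases hjj : j' = j
            · subst hjj; exact ⟨j', hqj', hj⟩
            · have hd1 : dist b (ctr j) ≤ RY := hcen j b hbj
              have hd2 : dist q (ctr j') ≤ RY := hcen j' q hqj'
              have hdjj : dist (ctr j) (ctr j') ≤ r + 2 * RY := by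
                have t1 := dist_triangle (ctr j) b (ctr j')
                have t2 := dist_triangle b q (ctr j')
                have e1 : dist (ctr j) b = dist b (ctr j) := dist_comm _ _
                linarith
              have hboth : (j : ℝ) ≤ r + 2 * RY ∧ (j' : ℝ) ≤ r + 2 * RY := by
                rcases lt_or_gt_of_ne hjj with hlt | hgt
                · -- j' < j
                  have hs := hsep j' j hlt
                  have hjle : (j : ℝ) ≤ r + 2 * RY := by
                    have e : dist (ctr j') (ctr j) = dist (ctr j) (ctr j') := dist_comm _ _
                    linarith
                  have : (j' : ℝ) ≤ (j : ℝ) := by exact_mod_cast (le_of_lt hlt)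
                  exact ⟨hjle, this.trans hjle⟩
                · -- j < j'
                  have hs := hsep j j' hgt
                  have hjle : (j' : ℝ) ≤ r + 2 * RY := by linarith
                  have : (j : ℝ) ≤ (j' : ℝ) := by exact_mod_cast (le_of_lt hgt)
                  exact ⟨this.trans hjle, hjle⟩
              have hk₀ : (k₀ : ℝ) ≤ r + 2 * RY := by
                rcases hj with rfl | hj2
                · exact hboth.1
                · exact hj2.2
              exact ⟨j', hqj', Or.inr ⟨hboth.2, hk₀⟩⟩
        obtain ⟨j, hyj, hj⟩ := key
        have h1 : dist x (ctr k₀) ≤ RY := hcen k₀ x hxk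
        have h2 : dist y (ctr j) ≤ RY := hcen j y hyj
        have hd0 : (0 : ℝ) ≤ dist (ctr ⌈r + 2 * RY⌉₊) y₀ := dist_nonneg
        rcases hj with rfl | ⟨hjb, hkb⟩
        · have t1 := dist_triangle x (ctr j) y
          have e1 : dist (ctr j) y = dist y (ctr j) := dist_comm _ _
          linarith
        · have hjN : j ≤ ⌈r + 2 * RY⌉₊ := by
            have : (j : ℝ) ≤ (⌈r + 2 * RY⌉₊ : ℝ) := hjb.trans (Nat.le_ceil _)
            exact_mod_cast this
          have hkN : k₀ ≤ ⌈r + 2 * RY⌉₊ := by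
            have : (k₀ : ℝ) ≤ (⌈r + 2 * RY⌉₊ : ℝ) := hkb.trans (Nat.le_ceil _)
            exact_mod_cast this
          have m1 : dist (ctr j) y₀ ≤ dist (ctr ⌈r + 2 * RY⌉₊) y₀ := hmono hjN
          have m2 : dist (ctr k₀) y₀ ≤ dist (ctr ⌈r + 2 * RY⌉₊) y₀ := hmono hkN
          have t1 := dist_triangle4 x (ctr k₀) (ctr j) y
          have t2 := dist_triangle (ctr k₀) y₀ (ctr j)
          have e1 : dist y₀ (ctr j) = dist (ctr j) y₀ := dist_comm _ _
          have e2 : dist (ctr j) y = dist y (ctr j) := dist_comm _ _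
          linarith
      have hA0 : AsdimLE (f '' (⋃ k, (seq k).2)) 0 := by
        refine asdimLE_zero_aux _ (fun r => 2 * RY + 2 * dist (ctr ⌈r + 2 * RY⌉₊) y₀)
          (fun r _ => ?_) hcb
        show 0 < 2 * RY + 2 * dist (ctr ⌈r + 2 * RY⌉₊) y₀
        have := dist_nonneg (x := ctr ⌈r + 2 * RY⌉₊) (y := y₀)
        linarith
      obtain ⟨DA, _, hDA⟩ := h _ hA0
      have hd : MyDecomp m (⋃ k, (seq k).2) rX (DA rX) := hDA rX hrX
      exact (hseq ⌈DA rX⌉₊).2.2 (myDecomp_mono (Nat.le_ceil _)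
        (myDecomp_subset (Set.subset_iUnion (fun k => (seq k).2) ⌈DA rX⌉₊) hd))
  refine ⟨fun rX RY => if hc : 0 < rX ∧ 0 < RY then (main rX hc.1 RY hc.2).choose else 1,
    ?_, ?_⟩
  · intro rX hr RY hR
    simp only [dif_pos (And.intro hr hR)]
    exact (main rX hr RY hR).choose_spec.1
  · intro rX hr RY hR A hA
    simp only [dif_pos (And.intro hr hR)]
    exact (main rX hr RY hR).choose_spec.2 A hA
end

section
/- Let f : X → Y be a function of metric spaces, m ≥ 0, and let D⁽ᵐ⁺¹⁾ : (0,∞) × (0,∞) → (0,∞) be an m-dimensional control function of f. Define inductively D⁽ᵏ⁾(r_X, R_Y) = D⁽ᵏ⁻¹⁾(3·r_X, R_Y) + 2·r_X for k > m+1. Then for every k ≥ m+1 the function D⁽ᵏ⁾ is an (m,k)-dimensional control function of f. -/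
/-! Induction on `k`. Take a cover `C₁, …, Cₖ` of `A` for the radius `3r`. Replace each `Cᵢ`
by its `r`-neighbourhood `Fᵢ` in `A`: an `r`-chain in `Fᵢ` stays `r`-close to a `3r`-chain in
`Cᵢ`, so it is `(D (3r) + 2r)`-bounded. Add the set `S` of points of `A` that lie in every `Cᵢ`
they are `r`-close to: an `r`-chain in `S` starting in `Cᵢ` never leaves `Cᵢ`. A point of `A`
outside `S` is `r`-close to some `Cᵢ` not containing it, hence lies in one more of the `Fᵢ`
than of the `Cᵢ`; a point of `S` lies in `S` itself. Either way the multiplicity goes up by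
one. -/

open Metric Set

/-- `D` is an `(m,k)`-dimensional control function of `f : X → Y`: for all `rX, RY > 0`,
every subset `A ⊆ X` whose image has diameter at most `RY` is the union of `k` sets
whose `rX`-components are `D rX RY`-bounded, such that every point of `A` belongs to at
least `k - m` of the `k` sets. An `m`-dimensional control function of `f` is the case
`k = m + 1`. -/
def IsFnNKControl {X Y : Type*} [MetricSpace X] [MetricSpace Y] (f : X → Y) (m k : ℕ)
    (D : ℝ → ℝ → ℝ) : Prop :=
  ∀ rX > 0, ∀ RY > 0, ∀ A : Set X, ImDiamLE f A RY →
    ∃ C : Fin k → Set X,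
      (∀ i, C i ⊆ A) ∧ A ⊆ (⋃ i, C i) ∧
      (∀ i, CompBounded (C i) rX (D rX RY)) ∧
      ∀ x ∈ A, k - m ≤ {i : Fin k | x ∈ C i}.ncard

def thickeningWithin {X : Type*} [MetricSpace X] (A S : Set X) (r : ℝ) : Set X :=
  {x | x ∈ A ∧ ∃ a ∈ S, dist x a ≤ r}

section Chains

variable {X : Type*} [MetricSpace X]

theorem subset_thickeningWithin {A S : Set X} {r : ℝ} (hSA : S ⊆ A) (hr : 0 ≤ r) :
    S ⊆ thickeningWithin A S r :=
  fun x hx => ⟨hSA hx, x, hx, by simpa using hr⟩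

theorem ChainRel.mono_radius {A : Set X} {r r' : ℝ} (hr : r ≤ r') {x y : X}
    (h : ChainRel A r x y) : ChainRel A r' x y :=
  Relation.ReflTransGen.mono (fun _ _ hab => ⟨hab.1, hab.2.trans hr⟩) _ _ h

theorem CompBounded.mono_s11 {A : Set X} {r r' R R' : ℝ} (hr : r ≤ r') (hR : R ≤ R')
    (h : CompBounded A r' R) : CompBounded A r R' :=
  fun x hx y hy hxy => (h x hx y hy (hxy.mono_radius hr)).trans hR

theorem ChainRel.exists_chain_of_forall_near {S T : Set X} {s ε : ℝ}
    (hnear : ∀ y ∈ T, ∃ b ∈ S, dist y b ≤ ε) {x z a : X} (ha : a ∈ S) (hxa : dist x a ≤ ε)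
    (h : ChainRel T s x z) : ∃ b ∈ S, dist z b ≤ ε ∧ ChainRel S (s + 2 * ε) a b := by
  induction h with
  | refl => exact ⟨a, ha, hxa, .refl⟩
  | @tail y z _ hyz ih =>
    obtain ⟨b, hb, hyb, hab⟩ := ih
    obtain ⟨c, hc, hzc⟩ := hnear z hyz.1
    refine ⟨c, hc, hzc, hab.tail ⟨hc, ?_⟩⟩
    calc dist b c ≤ dist b y + dist y z + dist z c := dist_triangle4 _ _ _ _
      _ ≤ s + 2 * ε := by rw [dist_comm]; linarith [hyz.2]

theorem CompBounded.of_forall_near {S T : Set X} {s ε R : ℝ}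
    (hnear : ∀ y ∈ T, ∃ b ∈ S, dist y b ≤ ε) (h : CompBounded S (s + 2 * ε) R) :
    CompBounded T s (R + 2 * ε) := by
  intro x hx z _ hxz
  obtain ⟨a, ha, hxa⟩ := hnear x hx
  obtain ⟨b, hb, hzb, hab⟩ := hxz.exists_chain_of_forall_near hnear ha hxa
  calc dist x z ≤ dist x a + dist a b + dist b z := dist_triangle4 _ _ _ _
    _ ≤ ε + R + ε := by rw [dist_comm b]; gcongr; exact h a ha b hb hab
    _ = R + 2 * ε := by ring

theorem ChainRel.mem_of_absorbing {S T : Set X} {r : ℝ}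
    (habs : ∀ y ∈ T, (∃ b ∈ S, dist y b ≤ r) → y ∈ S) {x z : X} (hx : x ∈ S)
    (h : ChainRel T r x z) : z ∈ S ∧ ChainRel S r x z := by
  induction h with
  | refl => exact ⟨hx, .refl⟩
  | @tail y z _ hyz ih =>
    have hz : z ∈ S := habs z hyz.1 ⟨y, ih.1, by rw [dist_comm]; exact hyz.2⟩
    exact ⟨hz, ih.2.tail ⟨hz, hyz.2⟩⟩

theorem CompBounded.of_forall_absorbing {ι : Type*} {S : ι → Set X} {T : Set X} {r R : ℝ}
    (hcov : ∀ x ∈ T, ∃ i, x ∈ S i)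
    (habs : ∀ i, ∀ y ∈ T, (∃ b ∈ S i, dist y b ≤ r) → y ∈ S i)
    (h : ∀ i, CompBounded (S i) r R) : CompBounded T r R := by
  intro x hx z _ hxz
  obtain ⟨i, hi⟩ := hcov x hx
  obtain ⟨hz, hxz'⟩ := hxz.mem_of_absorbing (habs i) hi
  exact h i x hi z hz hxz'

end Chains

theorem ncard_setOf_mem_snoc {α : Type*} {k : ℕ} (F : Fin k → Set α) (S : Set α) (x : α)
    [Decidable (x ∈ S)] :
    {j | x ∈ (Fin.snoc F S : Fin (k + 1) → Set α) j}.ncard =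
      {i | x ∈ F i}.ncard + if x ∈ S then 1 else 0 := by
  classical
  simp only [Set.ncard_eq_toFinset_card', Set.toFinset_ofPred, Finset.card_filter,
    Fin.sum_univ_castSucc, Fin.snoc_castSucc, Fin.snoc_last]

theorem IsFnNKControl.succ {X Y : Type*} [MetricSpace X] [MetricSpace Y] {f : X → Y}
    {m k : ℕ} {D : ℝ → ℝ → ℝ} (hD : IsFnNKControl f m k D) :
    IsFnNKControl f m (k + 1) (fun rX RY => D (3 * rX) RY + 2 * rX) := by
  classical
  intro r hr R hR A hA
  obtain ⟨C, hCA, hAC, hCbd, hCmult⟩ := hD (3 * r) (by positivity) R hR A hA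
  have hcov : ∀ x ∈ A, ∃ i, x ∈ C i := fun x hx => Set.mem_iUnion.1 (hAC hx)
  set F : Fin k → Set X := fun i => thickeningWithin A (C i) r
  set S : Set X := {x | x ∈ A ∧ ∀ i, x ∈ F i → x ∈ C i}
  have hCF : ∀ i, C i ⊆ F i := fun i => subset_thickeningWithin (hCA i) hr.le
  refine ⟨Fin.snoc F S, ?_, ?_, ?_, ?_⟩
  · refine Fin.lastCases ?_ (fun i => ?_) <;> simp only [Fin.snoc_last, Fin.snoc_castSucc]
    exacts [fun x hx => hx.1, fun x hx => hx.1]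
  · intro x hx
    obtain ⟨i, hi⟩ := hcov x hx
    exact Set.mem_iUnion.2 ⟨i.castSucc, by simpa using hCF i hi⟩
  · have h3r : 3 * r = r + 2 * r := by ring
    refine Fin.lastCases ?_ (fun i => ?_) <;> simp only [Fin.snoc_last, Fin.snoc_castSucc]
    · refine CompBounded.of_forall_absorbing (fun x hx => hcov x hx.1)
        (fun i y hy hyC => hy.2 i ⟨hy.1, hyC⟩) (fun i => ?_)
      exact (hCbd i).mono_s11 (by linarith) (by linarith)
    · exact CompBounded.of_forall_near (fun y hy => hy.2) (h3r ▸ hCbd i)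
  · intro x hx
    have hgain : {i | x ∈ C i}.ncard + 1 ≤ {i | x ∈ F i}.ncard + if x ∈ S then 1 else 0 := by
      split_ifs with hxS
      · exact Nat.add_le_add_right (Set.ncard_le_ncard (fun i hi => hCF i hi)) 1
      · obtain ⟨i₀, hxF, hxC⟩ : ∃ i₀, x ∈ F i₀ ∧ x ∉ C i₀ := by
          by_contra! h
          exact hxS ⟨hx, h⟩
        rw [← Set.ncard_insert_of_notMem (s := {i | x ∈ C i}) hxC]
        exact Set.ncard_le_ncard (Set.insert_subset hxF (fun i hi => hCF i hi))
    rw [ncard_setOf_mem_snoc]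
    have := hCmult x hx
    omega

theorem stmt11_general {X Y : Type*} [MetricSpace X] [MetricSpace Y] (f : X → Y) (m : ℕ)
    (D : ℕ → ℝ → ℝ → ℝ)
    (hbase : IsFnNKControl f m (m + 1) (D (m + 1)))
    (hind : ∀ k ≥ m + 1, ∀ rX RY : ℝ, D (k + 1) rX RY = D k (3 * rX) RY + 2 * rX) :
    ∀ k ≥ m + 1, IsFnNKControl f m k (D k) := by
  intro k hk
  induction k, hk using Nat.le_induction with
  | base => exact hbase
  | succ k hk ih =>
    have hD : D (k + 1) = fun rX RY => D k (3 * rX) RY + 2 * rX := by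
      funext rX RY
      exact hind k hk rX RY
    exact hD ▸ ih.succ

/-- If `D (m+1)` is an `m`-dimensional control function of `f` (i.e. an
`(m, m+1)`-dimensional control function) and `D (k+1) rX RY = D k (3 rX) RY + 2 rX` for
`k ≥ m + 1`, then `D k` is an `(m,k)`-dimensional control function of `f` for every
`k ≥ m + 1`. -/
theorem stmt11 {X Y : Type*} [MetricSpace X] [MetricSpace Y] (f : X → Y) (m : ℕ)
    (D : ℕ → ℝ → ℝ → ℝ)
    (hpos : ∀ rX > 0, ∀ RY > 0, 0 < D (m + 1) rX RY)
    (hbase : IsFnNKControl f m (m + 1) (D (m + 1)))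
    (hind : ∀ k ≥ m + 1, ∀ rX RY : ℝ, D (k + 1) rX RY = D k (3 * rX) RY + 2 * rX) :
    ∀ k ≥ m + 1, IsFnNKControl f m k (D k) :=
  stmt11_general f m D hbase hind
end

section
/- Let f : X → Y be a function of metric spaces, k ≥ m+1 ≥ 1, and let D_f : (0,∞) × (0,∞) → (0,∞) be an (m,k)-dimensional control function of f. Then for all r_X, r_Y, R_Y > 0 and every subset B ⊆ Y whose r_Y-components are R_Y-bounded, the set f⁻¹(B) can be covered by k sets each of whose (r_X, r_Y)-components are (D_f(r_X, R_Y), D_f(r_X, R_Y))-bounded in the X-coordinate, i.e. each (r_X,r_Y)-component has diameter at most D_f(r_X, R_Y) in X, and every element of f⁻¹(B) belongs to at least k−m of the k covering sets. -/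
/-!
The `rY`-components of `B` partition it, and the preimage of each component has image of
diameter at most `RY`, so the control function covers it by `k` pieces. Gluing the `i`-th
pieces over all components gives the `i`-th set. An `(rX, rY)`-chain never leaves the
preimage of one component, since consecutive images are `rY`-close; hence it is an
`rX`-chain inside a single piece, whose `rX`-components are `D rX RY`-bounded.
-/

open Metric Set

/-- The chain relation generating the `(rX, rY)`-components (with respect to `f`) of a
subset `A` of `X`. -/
def FChainRel {X Y : Type*} [MetricSpace X] [MetricSpace Y] (f : X → Y) (A : Set X)
    (rX rY : ℝ) : X → X → Prop :=
  Relation.ReflTransGen (fun a b => b ∈ A ∧ dist a b ≤ rX ∧ dist (f a) (f b) ≤ rY)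

namespace ChainRel

variable {X : Type*} [MetricSpace X] {A : Set X} {r : ℝ} {x y : X}

lemma mem (hx : x ∈ A) (h : ChainRel A r x y) : y ∈ A := by
  induction h with
  | refl => exact hx
  | tail _ hstep _ => exact hstep.1

lemma symm (hx : x ∈ A) (h : ChainRel A r x y) : ChainRel A r y x := by
  induction h with
  | refl => exact Relation.ReflTransGen.refl
  | tail hxb hstep ih =>
    exact Relation.ReflTransGen.head ⟨mem hx hxb, by rw [dist_comm]; exact hstep.2⟩ ih

end ChainRel

section Components

variable {X Y : Type*} [MetricSpace X] [MetricSpace Y] {B : Set Y} {r R : ℝ} {z w : Y}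

def chainComponent (B : Set Y) (r : ℝ) (z : Y) : Set Y :=
  {y ∈ B | ChainRel B r z y}

lemma mem_chainComponent_self (hz : z ∈ B) : z ∈ chainComponent B r z :=
  ⟨hz, Relation.ReflTransGen.refl⟩

lemma chainComponent_eq_of_chainRel (hz : z ∈ B) (h : ChainRel B r z w) :
    chainComponent B r w = chainComponent B r z := by
  ext y
  constructor
  · rintro ⟨hy, hwy⟩
    exact ⟨hy, h.trans hwy⟩
  · rintro ⟨hy, hzy⟩
    exact ⟨hy, (h.symm hz).trans hzy⟩

lemma CompBounded.imDiamLE_preimage_chainComponent (hB : CompBounded B r R) (f : X → Y)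
    (hz : z ∈ B) : ImDiamLE f (f ⁻¹' chainComponent B r z) R :=
  fun _ hx _ hy => hB _ hx.1 _ hy.1 ((hx.2.symm hz).trans hy.2)

lemma FChainRel.chainRel_image {f : X → Y} {A : Set X} {rX : ℝ} {x y : X}
    (hA : MapsTo f A B) (h : FChainRel f A rX r x y) : ChainRel B r (f x) (f y) := by
  induction h with
  | refl => exact Relation.ReflTransGen.refl
  | tail _ hstep ih => exact ih.tail ⟨hA hstep.1, hstep.2.2⟩

end Components

lemma IsFnNKControl.exists_cover {X Y : Type*} [MetricSpace X] [MetricSpace Y] {f : X → Y}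
    {m k : ℕ} {D : ℝ → ℝ → ℝ} (hD : IsFnNKControl f m k D) {rX RY : ℝ} (hrX : 0 < rX)
    (hRY : 0 < RY) :
    ∃ cover : Set X → Fin k → Set X, ∀ A, ImDiamLE f A RY →
      (∀ i, cover A i ⊆ A) ∧ A ⊆ (⋃ i, cover A i) ∧
      (∀ i, CompBounded (cover A i) rX (D rX RY)) ∧
      ∀ x ∈ A, k - m ≤ {i : Fin k | x ∈ cover A i}.ncard := by
  classical
  refine ⟨fun A => if h : ImDiamLE f A RY then (hD rX hrX RY hRY A h).choose else fun _ => ∅,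
    fun A h => ?_⟩
  simpa only [dif_pos h] using (hD rX hrX RY hRY A h).choose_spec

section ComponentwiseCover

variable {X Y ι : Type*} [MetricSpace X] [MetricSpace Y]

def componentwiseCover (f : X → Y) (B : Set Y) (rY : ℝ) (cover : Set X → ι → Set X)
    (i : ι) : Set X :=
  {x | f x ∈ B ∧ x ∈ cover (f ⁻¹' chainComponent B rY (f x)) i}

lemma FChainRel.chainRel_of_componentwiseCover {f : X → Y} {B : Set Y} {rX rY : ℝ}
    {cover : Set X → ι → Set X} {i : ι} {x y : X}
    (hx : x ∈ componentwiseCover f B rY cover i)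
    (h : FChainRel f (componentwiseCover f B rY cover i) rX rY x y) :
    ChainRel (cover (f ⁻¹' chainComponent B rY (f x)) i) rX x y := by
  induction h with
  | refl => exact Relation.ReflTransGen.refl
  | @tail b c hxb hstep ih =>
    have hxc : ChainRel B rY (f x) (f c) :=
      FChainRel.chainRel_image (fun _ hp => hp.1) (hxb.tail hstep)
    have hc := hstep.1.2
    rw [chainComponent_eq_of_chainRel hx.1 hxc] at hc
    exact ih.tail ⟨hc, hstep.2.1⟩

end ComponentwiseCover

theorem stmt12_general {X Y : Type*} [MetricSpace X] [MetricSpace Y] (f : X → Y) (m k : ℕ)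
    (D : ℝ → ℝ → ℝ) (hD : IsFnNKControl f m k D)
    (rX rY RY : ℝ) (hrX : 0 < rX) (hRY : 0 < RY)
    (B : Set Y) (hB : CompBounded B rY RY) :
    ∃ C : Fin k → Set X,
      (∀ i, C i ⊆ f ⁻¹' B) ∧ (f ⁻¹' B ⊆ ⋃ i, C i) ∧
      (∀ i, ∀ x ∈ C i, ∀ y ∈ C i, FChainRel f (C i) rX rY x y → dist x y ≤ D rX RY) ∧
      ∀ x ∈ f ⁻¹' B, k - m ≤ {i : Fin k | x ∈ C i}.ncard := by
  obtain ⟨cover, hcover⟩ := hD.exists_cover hrX hRY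
  have hpiece (x : X) (hx : f x ∈ B) := hcover _ (hB.imDiamLE_preimage_chainComponent f hx)
  refine ⟨componentwiseCover f B rY cover, fun _ _ hx => hx.1, fun x hx => ?_,
    fun i x hx y _ hxy => ?_, fun x hx => ?_⟩
  · obtain ⟨i, hi⟩ := mem_iUnion.1 ((hpiece x hx).2.1 (mem_chainComponent_self hx))
    exact mem_iUnion.2 ⟨i, hx, hi⟩
  · have hchain := hxy.chainRel_of_componentwiseCover hx
    exact (hpiece x hx.1).2.2.1 i x hx.2 y (hchain.mem hx.2) hchain
  · have hmult : {i | x ∈ componentwiseCover f B rY cover i} =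
        {i | x ∈ cover (f ⁻¹' chainComponent B rY (f x)) i} :=
      ext fun _ => and_iff_right hx
    rw [hmult]
    exact (hpiece x hx).2.2.2 x (mem_chainComponent_self hx)

/-- If `D` is an `(m,k)`-dimensional control function of `f` and `B ⊆ Y` has its
`rY`-components `RY`-bounded, then `f ⁻¹' B` can be covered by `k` sets whose
`(rX, rY)`-components have diameter at most `D rX RY` in `X`, with every point of
`f ⁻¹' B` belonging to at least `k - m` of the `k` sets. -/
theorem stmt12 {X Y : Type*} [MetricSpace X] [MetricSpace Y] (f : X → Y) (m k : ℕ)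
    (hk : m + 1 ≤ k) (D : ℝ → ℝ → ℝ) (hD : IsFnNKControl f m k D)
    (rX rY RY : ℝ) (hrX : 0 < rX) (hrY : 0 < rY) (hRY : 0 < RY)
    (B : Set Y) (hB : CompBounded B rY RY) :
    ∃ C : Fin k → Set X,
      (∀ i, C i ⊆ f ⁻¹' B) ∧ (f ⁻¹' B ⊆ ⋃ i, C i) ∧
      (∀ i, ∀ x ∈ C i, ∀ y ∈ C i, FChainRel f (C i) rX rY x y → dist x y ≤ D rX RY) ∧
      ∀ x ∈ f ⁻¹' B, k - m ≤ {i : Fin k | x ∈ C i}.ncard :=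
  stmt12_general f m k D hD rX rY RY hrX hRY B hB
end

section
/- Let G be a group and n ≥ 0. The following are equivalent: (a) for every finitely generated subgroup H of G with word metric d_S associated to a finite symmetric generating set S of H, asdim(H, d_S) ≤ n; (b) for each finite subset S of G there is a finite subset T of G and a decomposition G = A₁ ∪ … ∪ Aₙ₊₁ such that for every i ≤ n+1 the S-components of Aᵢ are T-bounded. -/
open Metric Set Pointwise

section Aux

variable {Γ : Type*} [Group Γ]

lemma finite_pow' {S : Set Γ} (hS : S.Finite) : ∀ m : ℕ, (S ^ m).Finite
  | 0 => by simpa [pow_zero] using Set.finite_one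
  | (m + 1) => by rw [pow_succ]; exact (finite_pow' hS m).mul hS

lemma exists_mem_pow' {S : Set Γ} (hsym : S⁻¹ = S) (hgen : Subgroup.closure S = ⊤)
    (x : Γ) : ∃ m, x ∈ S ^ m := by
  have hx : x ∈ Submonoid.closure S := by
    have hx' : x ∈ (Subgroup.closure S).toSubmonoid := by rw [hgen]; trivial
    rwa [Subgroup.closure_toSubmonoid, hsym, Set.union_self] at hx'
  obtain ⟨l, hl, rfl⟩ := Submonoid.exists_list_of_mem_closure hx
  clear hx
  induction l with
  | nil => exact ⟨0, by simp [pow_zero]⟩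
  | cons a l ih =>
    obtain ⟨m, hm⟩ := ih (fun y hy => hl y (List.mem_cons_of_mem _ hy))
    exact ⟨m + 1, by
      rw [pow_succ', List.prod_cons]
      exact Set.mul_mem_mul (hl a List.mem_cons_self) hm⟩

noncomputable def wlen (S : Set Γ) (x : Γ) : ℕ := sInf {m | x ∈ S ^ m}

variable {S : Set Γ}

lemma wlen_spec (hsym : S⁻¹ = S) (hgen : Subgroup.closure S = ⊤) (x : Γ) :
    x ∈ S ^ wlen S x :=
  Nat.sInf_mem (exists_mem_pow' hsym hgen x)

lemma wlen_le {x : Γ} {m : ℕ} (h : x ∈ S ^ m) : wlen S x ≤ m := Nat.sInf_le h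

lemma wlen_one : wlen S 1 = 0 :=
  Nat.le_zero.mp (wlen_le (by simp [pow_zero]))

lemma eq_one_of_wlen (hsym : S⁻¹ = S) (hgen : Subgroup.closure S = ⊤) {x : Γ}
    (h : wlen S x = 0) : x = 1 := by
  have hx := wlen_spec hsym hgen x
  rw [h, pow_zero] at hx
  simpa using hx

lemma wlen_inv_le (hsym : S⁻¹ = S) (hgen : Subgroup.closure S = ⊤) (x : Γ) :
    wlen S x⁻¹ ≤ wlen S x := by
  refine wlen_le ?_
  have hx := wlen_spec hsym hgen x
  have : x⁻¹ ∈ (S ^ wlen S x)⁻¹ := Set.inv_mem_inv.2 hx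
  rwa [← inv_pow, hsym] at this

lemma wlen_inv (hsym : S⁻¹ = S) (hgen : Subgroup.closure S = ⊤) (x : Γ) :
    wlen S x⁻¹ = wlen S x :=
  le_antisymm (wlen_inv_le hsym hgen x) (by
    have := wlen_inv_le hsym hgen x⁻¹
    rwa [inv_inv] at this)

lemma wlen_mul_le (hsym : S⁻¹ = S) (hgen : Subgroup.closure S = ⊤) (x y : Γ) :
    wlen S (x * y) ≤ wlen S x + wlen S y :=
  wlen_le (by
    rw [pow_add]
    exact Set.mul_mem_mul (wlen_spec hsym hgen x) (wlen_spec hsym hgen y))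

noncomputable def wordMetric (hsym : S⁻¹ = S) (hgen : Subgroup.closure S = ⊤) :
    MetricSpace Γ where
  dist x y := (wlen S (x⁻¹ * y) : ℝ)
  dist_self x := by
    show (wlen S (x⁻¹ * x) : ℝ) = 0
    simp [wlen_one (S := S)]
  dist_comm x y := by
    show (wlen S (x⁻¹ * y) : ℝ) = (wlen S (y⁻¹ * x) : ℝ)
    have h1 : y⁻¹ * x = (x⁻¹ * y)⁻¹ := by group
    rw [h1, wlen_inv hsym hgen]
  dist_triangle x y z := by
    show (wlen S (x⁻¹ * z) : ℝ) ≤ (wlen S (x⁻¹ * y) : ℝ) + (wlen S (y⁻¹ * z) : ℝ)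
    have h1 : x⁻¹ * z = (x⁻¹ * y) * (y⁻¹ * z) := by group
    rw [h1]
    exact_mod_cast wlen_mul_le hsym hgen (x⁻¹ * y) (y⁻¹ * z)
  eq_of_dist_eq_zero := by
    intro x y h
    have h' : (wlen S (x⁻¹ * y) : ℝ) = 0 := h
    have h0 : wlen S (x⁻¹ * y) = 0 := by exact_mod_cast h'
    exact inv_mul_eq_one.mp (eq_one_of_wlen hsym hgen h0)

end Aux

/-- The chain relation generating `S`-components of a subset `A` of a group `G`:
consecutive points `a, b` of a chain lie in `A` and satisfy `a⁻¹ * b ∈ S` or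
`b⁻¹ * a ∈ S`. -/
def SChainRel {G : Type*} [Group G] (A S : Set G) : G → G → Prop :=
  Relation.ReflTransGen (fun a b => b ∈ A ∧ (a⁻¹ * b ∈ S ∨ b⁻¹ * a ∈ S))

/-- All `S`-components of `A` are `T`-bounded: any two points `x, y` of `A` in the same
`S`-component satisfy `x⁻¹ * y ∈ T`. -/
def SCompBounded {G : Type*} [Group G] (A S T : Set G) : Prop :=
  ∀ x ∈ A, ∀ y ∈ A, SChainRel A S x y → x⁻¹ * y ∈ T

/-- For a group `G` and `n ≥ 0` the following are equivalent:
(a) every finitely generated subgroup `H` of `G`, equipped with the word metric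
`d_S (x, y) = min {m | x⁻¹ y ∈ S ^ m}` associated to a finite symmetric generating set
`S` of `H`, satisfies `asdim (H, d_S) ≤ n`;
(b) for each finite `S ⊆ G` there are a finite `T ⊆ G` and a decomposition
`G = A 1 ∪ … ∪ A (n+1)` such that the `S`-components of each `A i` are `T`-bounded. -/
theorem stmt17 {G : Type*} [Group G] (n : ℕ) :
    (∀ (H : Subgroup G) (S : Set H), S.Finite → S⁻¹ = S → Subgroup.closure S = ⊤ →
      ∀ (_ : MetricSpace H),
        (∀ x y : H, dist x y = (sInf {m : ℕ | x⁻¹ * y ∈ S ^ m} : ℕ)) →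
        AsdimLE (Set.univ : Set H) n) ↔
    (∀ S : Set G, S.Finite → ∃ T : Set G, T.Finite ∧
      ∃ A : Fin (n + 1) → Set G, (⋃ i, A i) = Set.univ ∧
        ∀ i, SCompBounded (A i) S T) := by
  constructor
  · -- (a) → (b)
    intro h S hSfin
    set S₁ : Set G := S ∪ S⁻¹ with hS₁def
    have hS₁fin : S₁.Finite := hSfin.union hSfin.inv
    have hS₁sym : S₁⁻¹ = S₁ := by
      rw [hS₁def, Set.union_inv, inv_inv, Set.union_comm]
    set H : Subgroup G := Subgroup.closure S₁ with hHdef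
    set Sh : Set H := ((↑) : H → G) ⁻¹' S₁ with hShdef
    have hShfin : Sh.Finite := hS₁fin.preimage Subtype.coe_injective.injOn
    have hShsym : Sh⁻¹ = Sh := by
      ext x
      simp only [hShdef, Set.mem_inv, Set.mem_preimage, Subgroup.coe_inv]
      rw [← Set.mem_inv, hS₁sym]
    have hShgen : Subgroup.closure Sh = ⊤ := Subgroup.closure_closure_coe_preimage
    letI M : MetricSpace H := wordMetric hShsym hShgen
    obtain ⟨D, hDpos, hctrl⟩ := h H Sh hShfin hShsym hShgen M (fun x y => rfl)
    obtain ⟨C, hCsub, hCcov, hCB⟩ := hctrl 1 one_pos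
    set N : ℕ := ⌈D 1⌉₊ with hN
    have hρmem : ∀ g : G, ((QuotientGroup.mk g : G ⧸ H)).out⁻¹ * g ∈ H := fun g =>
      QuotientGroup.eq.mp (QuotientGroup.out_eq' (QuotientGroup.mk g))
    set ρ : G → H := fun g => ⟨((QuotientGroup.mk g : G ⧸ H)).out⁻¹ * g, hρmem g⟩ with hρ
    have hρdiff : ∀ a b : G, (hab : a⁻¹ * b ∈ H) → (ρ a)⁻¹ * ρ b = (⟨a⁻¹ * b, hab⟩ : H) := by
      intro a b hab
      have hq : (QuotientGroup.mk a : G ⧸ H) = QuotientGroup.mk b := QuotientGroup.eq.mpr hab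
      apply Subtype.ext
      show (((QuotientGroup.mk a : G ⧸ H)).out⁻¹ * a)⁻¹ *
        (((QuotientGroup.mk b : G ⧸ H)).out⁻¹ * b) = a⁻¹ * b
      rw [hq]; group
    refine ⟨((↑) : H → G) '' (⋃ k ∈ Finset.range (N + 1), Sh ^ k), ?_,
      fun i => ρ ⁻¹' (C i), ?_, ?_⟩
    · exact (Set.Finite.biUnion (Finset.range (N + 1)).finite_toSet
        (fun k _ => finite_pow' hShfin k)).image _
    · apply Set.eq_univ_iff_forall.mpr
      intro g
      obtain ⟨i, hi⟩ := Set.mem_iUnion.mp (hCcov (Set.mem_univ (ρ g)))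
      exact Set.mem_iUnion.mpr ⟨i, hi⟩
    · intro i x hx y hy hchain
      have step : ∀ {z : G}, SChainRel (ρ ⁻¹' (C i)) S x z →
          x⁻¹ * z ∈ H ∧ ChainRel (C i) 1 (ρ x) (ρ z) := by
        intro z hz
        induction hz with
        | refl => exact ⟨by simpa using H.one_mem, Relation.ReflTransGen.refl⟩
        | @tail b c hab hbc ih =>
          obtain ⟨hxb, hchain'⟩ := ih
          obtain ⟨hcA, hstep⟩ := hbc
          have hbc1 : b⁻¹ * c ∈ S₁ := by
            rcases hstep with hl | hr
            · exact Set.mem_union_left _ hl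
            · refine Set.mem_union_right _ ?_
              rw [Set.mem_inv]
              simpa using hr
          have hbcH : b⁻¹ * c ∈ H := Subgroup.subset_closure hbc1
          have hxc : x⁻¹ * c ∈ H := by
            have := H.mul_mem hxb hbcH
            simpa [mul_assoc] using this
          refine ⟨hxc, hchain'.tail ⟨hcA, ?_⟩⟩
          show (wlen Sh ((ρ b)⁻¹ * ρ c) : ℝ) ≤ 1
          have hmem1 : ((ρ b)⁻¹ * ρ c) ∈ Sh := by
            rw [hρdiff b c hbcH]
            exact hbc1
          have : wlen Sh ((ρ b)⁻¹ * ρ c) ≤ 1 := wlen_le (by rwa [pow_one])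
          exact_mod_cast this
      obtain ⟨hxyH, hch⟩ := step hchain
      have hd : dist (ρ x) (ρ y) ≤ D 1 := hCB i (ρ x) hx (ρ y) hy hch
      have hw : wlen Sh ((ρ x)⁻¹ * ρ y) ≤ N := by
        have h1 : (wlen Sh ((ρ x)⁻¹ * ρ y) : ℝ) ≤ D 1 := hd
        have h2 : D 1 ≤ (N : ℝ) := Nat.le_ceil _
        exact_mod_cast h1.trans h2
      refine ⟨(ρ x)⁻¹ * ρ y, ?_, by rw [hρdiff x y hxyH]⟩
      exact Set.mem_iUnion₂.mpr ⟨_, Finset.mem_range.mpr (Nat.lt_succ_of_le hw),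
        wlen_spec hShsym hShgen _⟩
  · -- (b) → (a)
    intro hb H S hSfin hsym hgen M hdist
    have claim : ∀ r : ℝ, 0 < r → ∃ B : ℝ, 1 ≤ B ∧ ∃ C : Fin (n + 1) → Set H,
        (∀ i, C i ⊆ Set.univ) ∧ (Set.univ : Set H) ⊆ ⋃ i, C i ∧
        ∀ i, CompBounded (C i) r B := by
      intro r hr
      set m : ℕ := ⌈r⌉₊ with hm
      set S₀ : Set G := ((↑) : H → G) '' (⋃ k ∈ Finset.range (m + 1), S ^ k) with hS₀def
      have hS₀fin : S₀.Finite := (Set.Finite.biUnion (Finset.range (m + 1)).finite_toSet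
        (fun k _ => finite_pow' hSfin k)).image _
      obtain ⟨T, hTfin, A, hAcov, hAb⟩ := hb S₀ hS₀fin
      have hT'fin : (((↑) : H → G) ⁻¹' T).Finite := hTfin.preimage Subtype.coe_injective.injOn
      refine ⟨max 1 ((hT'fin.toFinset.sup (wlen S) : ℕ) : ℝ), le_max_left _ _,
        fun i => ((↑) : H → G) ⁻¹' (A i), fun i => Set.subset_univ _, ?_, ?_⟩
      · intro x _
        have hx : (x : G) ∈ ⋃ i, A i := by rw [hAcov]; trivial
        obtain ⟨i, hi⟩ := Set.mem_iUnion.mp hx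
        exact Set.mem_iUnion.mpr ⟨i, hi⟩
      · intro i x hx y hy hch
        have key : ∀ {z : H}, ChainRel (((↑) : H → G) ⁻¹' (A i)) r x z →
            SChainRel (A i) S₀ ↑x ↑z := by
          intro z hz
          induction hz with
          | refl => exact Relation.ReflTransGen.refl
          | @tail b c hab hbc ih =>
            refine ih.tail ⟨hbc.1, Or.inl ?_⟩
            have hd : (wlen S (b⁻¹ * c) : ℝ) ≤ r := by
              have := hbc.2
              rwa [hdist b c] at this
            have hk : wlen S (b⁻¹ * c) ≤ m := by
              have := hd.trans (Nat.le_ceil r)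
              exact_mod_cast this
            refine ⟨b⁻¹ * c, Set.mem_iUnion₂.mpr ⟨_, Finset.mem_range.mpr
              (Nat.lt_succ_of_le hk), wlen_spec hsym hgen _⟩, ?_⟩
            push_cast
            rfl
        have hxy := hAb i ↑x hx ↑y hy (key hch)
        have hmem : x⁻¹ * y ∈ ((↑) : H → G) ⁻¹' T := by
          show ((x⁻¹ * y : H) : G) ∈ T
          push_cast
          exact hxy
        have hle : wlen S (x⁻¹ * y) ≤ hT'fin.toFinset.sup (wlen S) :=
          Finset.le_sup (hT'fin.mem_toFinset.mpr hmem)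
        rw [hdist]
        exact le_trans (by exact_mod_cast hle) (le_max_right _ _)
    refine ⟨fun r => if h : 0 < r then (claim r h).choose else 1, ?_, ?_⟩
    · intro r hr
      simp only [dif_pos hr]
      exact lt_of_lt_of_le zero_lt_one (claim r hr).choose_spec.1
    · intro r hr
      obtain ⟨C, h1, h2, h3⟩ := (claim r hr).choose_spec.2
      exact ⟨C, h1, h2, by simpa [dif_pos hr] using h3⟩
end
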